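/- arXiv:2310.05311 — 8 statements merged into one kernel-verified Lean document; each statement's English description precedes it below -/
import Mathlib

section
/- Let (U, Z, X) have joint law Q with U ⊥ Z | X under Q, and let Q' be a probability measure with Q' ≪ Q whose density factorizes as dQ'/dQ = ψ₁(U,X)·ψ₂(Z,X)/c for bounded measurable functions ψ₁, ψ₂ > 0 and a normalizing constant c > 0. Then U is conditionally independent of Z given X under Q'. -/
/-!
By the abstract Bayes formula, the conditional expectation given a σ-algebra `m` under
`Q' = ρ • Q` is `Q[F ρ|m] / Q[ρ|m]`. Given `σ(Z, X)`, the factor `ψ₂(Z, X) / c` of `ρ` is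
measurable and cancels from this ratio, leaving `Q[F ψ₁(U, X)|σ(Z, X)] / Q[ψ₁(U, X)|σ(Z, X)]`,
which by conditional independence under `Q` is the `σ(X)`-measurable function
`Q[F ψ₁(U, X)|σ(X)] / Q[ψ₁(U, X)|σ(X)]`. By the tower property, a conditional expectation given
`σ(Z, X)` that has a `σ(X)`-measurable version is the conditional expectation given `σ(X)`.
-/

open MeasureTheory

section ChangeOfMeasure

variable {Ω : Type*} {m m' m0 : MeasurableSpace Ω} {μ : Measure Ω}

theorem setIntegral_withDensity_ofReal {ρ : Ω → ℝ} (hρm : Measurable ρ) (hρ0 : ∀ ω, 0 ≤ ρ ω)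
    (g : Ω → ℝ) {s : Set Ω} (hs : MeasurableSet s) :
    ∫ ω in s, g ω ∂μ.withDensity (fun ω => ENNReal.ofReal (ρ ω)) = ∫ ω in s, g ω * ρ ω ∂μ := by
  refine (setIntegral_withDensity_eq_setIntegral_smul hρm.real_toNNReal g hs).trans ?_
  refine setIntegral_congr_fun hs fun ω _ => ?_
  simp [NNReal.smul_def, Real.coe_toNNReal _ (hρ0 ω), mul_comm]

theorem abs_condExp_mul_le {F ρ : Ω → ℝ} {C : ℝ} (hFm : AEStronglyMeasurable F μ)
    (hF : ∀ ω, |F ω| ≤ C) (hρ0 : ∀ ω, 0 ≤ ρ ω) (hρ : Integrable ρ μ) :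
    ∀ᵐ ω ∂μ, |μ[F * ρ|m] ω| ≤ C * μ[ρ|m] ω := by
  have hFρ : Integrable (F * ρ) μ :=
    hρ.bdd_mul hFm (ae_of_all _ fun ω => (Real.norm_eq_abs _).trans_le (hF ω))
  have hle : |F * ρ| ≤ᵐ[μ] C • ρ := ae_of_all _ fun ω => by
    simp only [Pi.abs_apply, Pi.mul_apply, Pi.smul_apply, smul_eq_mul, abs_mul,
      abs_of_nonneg (hρ0 ω)]
    exact mul_le_mul_of_nonneg_right (hF ω) (hρ0 ω)
  filter_upwards [abs_condExp_ae_le_condExp_abs (m := m) (F * ρ),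
    condExp_mono (m := m) hFρ.abs (hρ.smul C) hle, condExp_smul (m := m) C ρ]
    with ω h_abs h_mono h_smul
  rw [h_smul] at h_mono
  exact h_abs.trans h_mono

theorem condExp_withDensity_ae_eq_div [IsFiniteMeasure μ] (hm : m ≤ m0) {F ρ : Ω → ℝ} {C : ℝ}
    (hFm : Measurable F) (hF : ∀ ω, |F ω| ≤ C) (hρm : Measurable ρ) (hρ0 : ∀ ω, 0 ≤ ρ ω)
    (hρ : Integrable ρ μ) :
    (μ.withDensity fun ω => ENNReal.ofReal (ρ ω))[F|m]
      =ᵐ[μ.withDensity fun ω => ENNReal.ofReal (ρ ω)] μ[F * ρ|m] / μ[ρ|m] := by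
  set ν := μ.withDensity fun ω => ENNReal.ofReal (ρ ω)
  have : IsFiniteMeasure ν := isFiniteMeasure_withDensity_ofReal hρ.hasFiniteIntegral
  have hνμ : ν ≪ μ := withDensity_absolutelyContinuous μ _
  have hFρ : Integrable (F * ρ) μ := hρ.bdd_mul hFm.aestronglyMeasurable
    (ae_of_all _ fun ω => (Real.norm_eq_abs _).trans_le (hF ω))
  set h := μ[F * ρ|m] / μ[ρ|m]
  have hh_m : Measurable[m] h :=
    stronglyMeasurable_condExp.measurable.div stronglyMeasurable_condExp.measurable
  -- where `μ[ρ|m] ω = 0`, both `h ω` (a division by zero) and `μ[F * ρ|m] ω` vanish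
  have hh_bound : ∀ᵐ ω ∂μ, |h ω| ≤ C ∧ μ[ρ|m] ω * h ω = μ[F * ρ|m] ω := by
    filter_upwards [abs_condExp_mul_le (m := m) hFm.aestronglyMeasurable hF hρ0 hρ,
      condExp_nonneg (m := m) (ae_of_all _ hρ0)] with ω hN hD
    rcases hD.eq_or_lt with hD0 | hDpos
    · have hN0 : μ[F * ρ|m] ω = 0 := abs_nonpos_iff.mp (by simpa [← hD0] using hN)
      simp [h, ← hD0, hN0, (abs_nonneg _).trans (hF ω)]
    · refine ⟨?_, mul_div_cancel₀ _ hDpos.ne'⟩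
      change |μ[F * ρ|m] ω / μ[ρ|m] ω| ≤ C
      rwa [abs_div, abs_of_pos hDpos, div_le_iff₀ hDpos]
  have hh_int : Integrable h ν := Integrable.of_bound
    (hh_m.mono hm le_rfl).aestronglyMeasurable C
    (hνμ.ae_le (hh_bound.mono fun ω hω => (Real.norm_eq_abs _).trans_le hω.1))
  have hhρ : Integrable (h * ρ) μ := hρ.bdd_mul (hh_m.mono hm le_rfl).aestronglyMeasurable
    (hh_bound.mono fun ω hω => (Real.norm_eq_abs _).trans_le hω.1)
  have hF_int : Integrable F ν := Integrable.of_bound hFm.aestronglyMeasurable C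
    (ae_of_all _ fun ω => (Real.norm_eq_abs _).trans_le (hF ω))
  refine (ae_eq_condExp_of_forall_setIntegral_eq hm hF_int (fun s _ _ => hh_int.integrableOn)
    (fun s hs _ => ?_) hh_m.stronglyMeasurable.aestronglyMeasurable).symm
  calc ∫ ω in s, h ω ∂ν = ∫ ω in s, (h * ρ) ω ∂μ :=
        setIntegral_withDensity_ofReal hρm hρ0 h (hm s hs)
    _ = ∫ ω in s, (μ[h * ρ|m]) ω ∂μ := (setIntegral_condExp hm hhρ hs).symm
    _ = ∫ ω in s, (μ[F * ρ|m]) ω ∂μ := by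
        refine setIntegral_congr_ae (hm s hs) ?_
        filter_upwards [condExp_mul_of_stronglyMeasurable_left hh_m.stronglyMeasurable hhρ hρ,
          hh_bound] with ω hω hω' _
        rw [hω, Pi.mul_apply, mul_comm, hω'.2]
    _ = ∫ ω in s, (F * ρ) ω ∂μ := setIntegral_condExp hm hFρ hs
    _ = ∫ ω in s, F ω ∂ν := (setIntegral_withDensity_ofReal hρm hρ0 F (hm s hs)).symm

theorem condExp_mul_div_condExp_mul_ae_eq (hm : m ≤ m0) {F P g : Ω → ℝ} {C : ℝ}
    (hg : StronglyMeasurable[m] g) (hg0 : ∀ ω, g ω ≠ 0) (hgC : ∀ ω, |g ω| ≤ C)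
    (hFP : Integrable (F * P) μ) (hP : Integrable P μ) :
    μ[F * (g * P)|m] / μ[g * P|m] =ᵐ[μ] μ[F * P|m] / μ[P|m] := by
  have hg_ae : AEStronglyMeasurable g μ := (hg.mono hm).aestronglyMeasurable
  have hg_bound : ∀ᵐ ω ∂μ, ‖g ω‖ ≤ C :=
    ae_of_all _ fun ω => (Real.norm_eq_abs _).trans_le (hgC ω)
  have hnum : μ[F * (g * P)|m] =ᵐ[μ] g * μ[F * P|m] := by
    rw [mul_left_comm]
    exact condExp_mul_of_stronglyMeasurable_left hg (hFP.bdd_mul hg_ae hg_bound) hFP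
  have hden : μ[g * P|m] =ᵐ[μ] g * μ[P|m] :=
    condExp_mul_of_stronglyMeasurable_left hg (hP.bdd_mul hg_ae hg_bound) hP
  filter_upwards [hnum, hden] with ω hn hd
  simp only [Pi.div_apply, hn, hd, Pi.mul_apply, mul_div_mul_left _ _ (hg0 ω)]

theorem condExp_ae_eq_condExp_of_le_of_aestronglyMeasurable [IsFiniteMeasure μ]
    (hm : m ≤ m') (hm' : m' ≤ m0)
    {F h : Ω → ℝ} (hh : AEStronglyMeasurable[m] h μ) (hFh : μ[F|m'] =ᵐ[μ] h) :
    μ[F|m'] =ᵐ[μ] μ[F|m] :=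
  calc μ[F|m'] =ᵐ[μ] h := hFh
    _ =ᵐ[μ] μ[h|m] :=
      (condExp_of_aestronglyMeasurable' (hm.trans hm') hh (integrable_condExp.congr hFh)).symm
    _ =ᵐ[μ] μ[μ[F|m']|m] := condExp_congr_ae hFh.symm
    _ =ᵐ[μ] μ[F|m] := condExp_condExp_of_le hm hm'

theorem condExp_withDensity_ae_eq_of_condExp_ae_eq [IsFiniteMeasure μ]
    (hm : m ≤ m') (hm' : m' ≤ m0) {F P g ρ : Ω → ℝ} {CF Cg : ℝ}
    (hFm : Measurable F) (hF : ∀ ω, |F ω| ≤ CF) (hPm : Measurable P) (hP0 : ∀ ω, 0 ≤ P ω)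
    (hP : Integrable P μ) (hg : StronglyMeasurable[m'] g) (hg0 : ∀ ω, 0 < g ω)
    (hgC : ∀ ω, |g ω| ≤ Cg) (hFP_ci : μ[F * P|m'] =ᵐ[μ] μ[F * P|m])
    (hP_ci : μ[P|m'] =ᵐ[μ] μ[P|m]) (hρ : ∀ ω, ρ ω = g ω * P ω) :
    (μ.withDensity fun ω => ENNReal.ofReal (ρ ω))[F|m']
      =ᵐ[μ.withDensity fun ω => ENNReal.ofReal (ρ ω)]
      (μ.withDensity fun ω => ENNReal.ofReal (ρ ω))[F|m] := by
  obtain rfl : ρ = g * P := funext hρ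
  have hg_ae : AEStronglyMeasurable g μ := (hg.mono hm').aestronglyMeasurable
  have hg_bound : ∀ᵐ ω ∂μ, ‖g ω‖ ≤ Cg :=
    ae_of_all _ fun ω => (Real.norm_eq_abs _).trans_le (hgC ω)
  have hFP : Integrable (F * P) μ := hP.bdd_mul hFm.aestronglyMeasurable
    (ae_of_all _ fun ω => (Real.norm_eq_abs _).trans_le (hF ω))
  have hgP : Integrable (g * P) μ := hP.bdd_mul hg_ae hg_bound
  have := isFiniteMeasure_withDensity_ofReal hgP.hasFiniteIntegral
  have hBayes := condExp_withDensity_ae_eq_div hm' hFm hF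
    ((hg.measurable.mono hm' le_rfl).mul hPm) (fun ω => mul_nonneg (hg0 ω).le (hP0 ω)) hgP
  have hcancel := condExp_mul_div_condExp_mul_ae_eq hm' hg (fun ω => (hg0 ω).ne') hgC hFP hP
  refine condExp_ae_eq_condExp_of_le_of_aestronglyMeasurable hm hm' ?_
    (hBayes.trans ((withDensity_absolutelyContinuous μ _).ae_eq
      (hcancel.trans (hFP_ci.div hP_ci))))
  exact (stronglyMeasurable_condExp.measurable.div
    stronglyMeasurable_condExp.measurable).aestronglyMeasurable

end ChangeOfMeasure

theorem stmt2_general {Ω α β γ : Type*} [MeasurableSpace Ω] [MeasurableSpace α]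
    [MeasurableSpace β] [MeasurableSpace γ]
    (Q : Measure Ω) [IsProbabilityMeasure Q]
    (U : Ω → α) (Z : Ω → β) (X : Ω → γ)
    (hU : Measurable U) (hZ : Measurable Z) (hX : Measurable X)
    (hCI : ∀ f : α × γ → ℝ, Measurable f → (∃ C, ∀ p, |f p| ≤ C) →
      Q[fun ω => f (U ω, X ω) | MeasurableSpace.comap (fun ω => (Z ω, X ω)) inferInstance]
        =ᵐ[Q] Q[fun ω => f (U ω, X ω) | MeasurableSpace.comap X inferInstance])
    (ψ₁ : α × γ → ℝ) (ψ₂ : β × γ → ℝ) (c : ℝ)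
    (hψ₁m : Measurable ψ₁) (hψ₂m : Measurable ψ₂)
    (hψ₁pos : ∀ p, 0 < ψ₁ p) (hψ₂pos : ∀ p, 0 < ψ₂ p)
    (hψ₁b : ∃ C, ∀ p, |ψ₁ p| ≤ C) (hψ₂b : ∃ C, ∀ p, |ψ₂ p| ≤ C)
    (hc : 0 < c)
    (Q' : Measure Ω)
    (hQ' : Q' = Q.withDensity
      (fun ω => ENNReal.ofReal (ψ₁ (U ω, X ω) * ψ₂ (Z ω, X ω) / c))) :
    ∀ f : α × γ → ℝ, Measurable f → (∃ C, ∀ p, |f p| ≤ C) →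
      Q'[fun ω => f (U ω, X ω) | MeasurableSpace.comap (fun ω => (Z ω, X ω)) inferInstance]
        =ᵐ[Q'] Q'[fun ω => f (U ω, X ω) | MeasurableSpace.comap X inferInstance] := by
  intro f hf ⟨Cf, hCf⟩
  obtain ⟨C₁, hC₁⟩ := hψ₁b
  obtain ⟨C₂, hC₂⟩ := hψ₂b
  have hZX : Measurable[MeasurableSpace.comap (fun ω => (Z ω, X ω)) inferInstance]
      fun ω => (Z ω, X ω) := Measurable.of_comap_le le_rfl
  have hUX : Measurable fun ω => (U ω, X ω) := hU.prodMk hX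
  have hψ₁_int : Integrable (fun ω => ψ₁ (U ω, X ω)) Q :=
    Integrable.of_bound (hψ₁m.comp hUX).aestronglyMeasurable C₁
      (ae_of_all _ fun ω => (Real.norm_eq_abs _).trans_le (hC₁ _))
  have hψ₂_bound : ∀ ω, |ψ₂ (Z ω, X ω) / c| ≤ C₂ / c := fun ω => by
    rw [abs_div, abs_of_pos hc]
    exact div_le_div_of_nonneg_right (hC₂ _) hc.le
  have hfψ₁_bound : ∀ p, |f p * ψ₁ p| ≤ Cf * C₁ := fun p => abs_mul (f p) (ψ₁ p) ▸
    mul_le_mul (hCf p) (hC₁ p) (abs_nonneg _) ((abs_nonneg _).trans (hCf p))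
  subst hQ'
  exact condExp_withDensity_ae_eq_of_condExp_ae_eq (P := fun ω => ψ₁ (U ω, X ω))
    (g := fun ω => ψ₂ (Z ω, X ω) / c) (measurable_snd.comp hZX).comap_le (hZ.prodMk hX).comap_le (hf.comp hUX) (fun ω => hCf _) (hψ₁m.comp hUX)
    (fun ω => (hψ₁pos _).le) hψ₁_int ((hψ₂m.comp hZX).div_const c).stronglyMeasurable
    (fun ω => div_pos (hψ₂pos _) hc) hψ₂_bound
    (hCI (fun p => f p * ψ₁ p) (hf.mul hψ₁m) ⟨_, hfψ₁_bound⟩) (hCI ψ₁ hψ₁m ⟨C₁, hC₁⟩)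
    (fun ω => by ring)

/-- If `U ⊥ Z | X` under `Q` and `Q' ≪ Q` has a density that factorizes as
`ψ₁(U,X)·ψ₂(Z,X)/c` with `ψ₁, ψ₂` bounded, positive and measurable and `c > 0`, then
`U ⊥ Z | X` under `Q'` (conditional independence stated via conditional expectations of
bounded functions `f(U,X)`). -/
theorem stmt2 {Ω α β γ : Type*} [MeasurableSpace Ω] [MeasurableSpace α]
    [MeasurableSpace β] [MeasurableSpace γ]
    (Q : Measure Ω) [IsProbabilityMeasure Q]
    (U : Ω → α) (Z : Ω → β) (X : Ω → γ)
    (hU : Measurable U) (hZ : Measurable Z) (hX : Measurable X)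
    (hCI : ∀ f : α × γ → ℝ, Measurable f → (∃ C, ∀ p, |f p| ≤ C) →
      Q[fun ω => f (U ω, X ω) | MeasurableSpace.comap (fun ω => (Z ω, X ω)) inferInstance]
        =ᵐ[Q] Q[fun ω => f (U ω, X ω) | MeasurableSpace.comap X inferInstance])
    (ψ₁ : α × γ → ℝ) (ψ₂ : β × γ → ℝ) (c : ℝ)
    (hψ₁m : Measurable ψ₁) (hψ₂m : Measurable ψ₂)
    (hψ₁pos : ∀ p, 0 < ψ₁ p) (hψ₂pos : ∀ p, 0 < ψ₂ p)
    (hψ₁b : ∃ C, ∀ p, |ψ₁ p| ≤ C) (hψ₂b : ∃ C, ∀ p, |ψ₂ p| ≤ C)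
    (hc : 0 < c)
    (Q' : Measure Ω) [IsProbabilityMeasure Q']
    (hQ' : Q' = Q.withDensity
      (fun ω => ENNReal.ofReal (ψ₁ (U ω, X ω) * ψ₂ (Z ω, X ω) / c))) :
    ∀ f : α × γ → ℝ, Measurable f → (∃ C, ∀ p, |f p| ≤ C) →
      Q'[fun ω => f (U ω, X ω) | MeasurableSpace.comap (fun ω => (Z ω, X ω)) inferInstance]
        =ᵐ[Q'] Q'[fun ω => f (U ω, X ω) | MeasurableSpace.comap X inferInstance] :=
  stmt2_general Q U Z X hU hZ hX hCI ψ₁ ψ₂ c hψ₁m hψ₂m hψ₁pos hψ₂pos hψ₁b hψ₂b hc Q' hQ'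
end

section
/- Let (U, Z, X) have joint law Q with U ⊥ Z | X, and let g ∈ L²(Q) be a function of (U, Z, X) such that E_Q[g · (h(Z,X) − E_Q[h(Z,X)|X]) · (f(U,X) − E_Q[f(U,X)|X])] = 0 for all bounded measurable h and f. Then g = E_Q[g | U, X] + E_Q[g | Z, X] − E_Q[g | X], Q-almost surely. -/
open MeasureTheory MeasurableSpace Filter

section Stmt5Aux

variable {Ω : Type*} [mΩ : MeasurableSpace Ω] {Q : Measure Ω} [IsProbabilityMeasure Q]

lemma stmt5_int_of_bdd {v : Ω → ℝ} {C : ℝ} (hv : AEStronglyMeasurable v Q)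
    (hb : ∀ᵐ ω ∂Q, |v ω| ≤ C) : Integrable v Q :=
  (integrable_const C).mono' hv (by simpa [Real.norm_eq_abs] using hb)

lemma stmt5_int_mul_bdd {u v : Ω → ℝ} {C : ℝ} (hu : Integrable u Q)
    (hv : AEStronglyMeasurable v Q) (hb : ∀ᵐ ω ∂Q, |v ω| ≤ C) :
    Integrable (fun ω => u ω * v ω) Q :=
  (hu.bdd_mul hv (by simpa [Real.norm_eq_abs] using hb)).congr
    (Eventually.of_forall fun ω => mul_comm _ _)

lemma stmt5_int3 {u v w : Ω → ℝ} {cv cw : ℝ} (hu : Integrable u Q)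
    (hv : AEStronglyMeasurable v Q) (hbv : ∀ᵐ ω ∂Q, |v ω| ≤ cv)
    (hw : AEStronglyMeasurable w Q) (hbw : ∀ᵐ ω ∂Q, |w ω| ≤ cw) :
    Integrable (fun ω => u ω * v ω * w ω) Q :=
  stmt5_int_mul_bdd (stmt5_int_mul_bdd hu hv hbv) hw hbw

lemma stmt5_bdd_condexp {m : MeasurableSpace Ω} {v : Ω → ℝ} {C : ℝ}
    (hb : ∀ᵐ ω ∂Q, |v ω| ≤ C) :
    ∀ᵐ ω ∂Q, |(Q[v|m]) ω| ≤ ((C.toNNReal : ℝ)) :=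
  ae_bdd_condExp_of_ae_bdd (hb.mono fun _ h => h.trans (Real.le_coe_toNNReal C))

lemma stmt5_preimage_integral_zero {δ : Type*} [mδ : MeasurableSpace δ]
    {T : Ω → δ} (hT : Measurable T) {v : Ω → ℝ} (hv : Integrable v Q)
    {S : Set (Set δ)} (hgen : mδ = generateFrom S) (hpi : IsPiSystem S)
    (h0 : ∫ ω, v ω ∂Q = 0)
    (hbasic : ∀ t ∈ S, ∫ ω in T ⁻¹' t, v ω ∂Q = 0) :
    ∀ ⦃E : Set δ⦄, MeasurableSet E → ∫ ω in T ⁻¹' E, v ω ∂Q = 0 := by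
  refine induction_on_inter hgen hpi (by simp) hbasic ?_ ?_
  · intro t ht hC
    have hadd := integral_add_compl (hT ht) hv
    rw [hC, h0] at hadd
    rw [Set.preimage_compl]
    linarith
  · intro s hd hms hC
    rw [Set.preimage_iUnion, integral_iUnion (fun i => hT (hms i))
        (fun i j hij => (hd hij).preimage T) hv.integrableOn]
    simp [hC]

lemma stmt5_proj {m : MeasurableSpace Ω} (hle : m ≤ mΩ) (w φ : Ω → ℝ)
    (hw : StronglyMeasurable[m] w) (hφ : Integrable φ Q)
    (hwφ : Integrable (fun ω => w ω * φ ω) Q) :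
    ∫ ω, w ω * φ ω ∂Q = ∫ ω, w ω * (Q[φ|m]) ω ∂Q := by
  haveI : SigmaFinite (Q.trim hle) := inferInstance
  have h2 : Q[fun ω => w ω * φ ω|m] =ᵐ[Q] fun ω => w ω * (Q[φ|m]) ω :=
    condExp_mul_of_stronglyMeasurable_left hw hwφ hφ
  calc ∫ ω, w ω * φ ω ∂Q
      = ∫ ω, (Q[fun ω => w ω * φ ω|m]) ω ∂Q := (integral_condExp hle).symm
    _ = ∫ ω, w ω * (Q[φ|m]) ω ∂Q := integral_congr_ae h2

end Stmt5Aux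

section Stmt5Key

lemma stmt5_key {Ω : Type*} {m0 m1 m2 : MeasurableSpace Ω} [mΩ : MeasurableSpace Ω]
    {Q : Measure Ω} [IsProbabilityMeasure Q]
    (hle0 : m0 ≤ mΩ) (hle1 : m1 ≤ mΩ) (hle2 : m2 ≤ mΩ)
    (hle01 : m0 ≤ m1) (hle02 : m0 ≤ m2)
    (g F H : Ω → ℝ) (hgi : Integrable g Q)
    (hFsm : StronglyMeasurable[m1] F) (hHsm : StronglyMeasurable[m2] H)
    {Cf Ch : ℝ} (hFb : ∀ ω, |F ω| ≤ Cf) (hHb : ∀ ω, |H ω| ≤ Ch)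
    (hci : Q[F|m2] =ᵐ[Q] Q[F|m0])
    (hsym : Q[H|m1] =ᵐ[Q] Q[H|m0])
    (horth0 : ∫ ω, g ω * (H ω - (Q[H|m0]) ω) * (F ω - (Q[F|m0]) ω) ∂Q = 0) :
    ∫ ω, (g ω - (Q[g|m1]) ω - (Q[g|m2]) ω + (Q[g|m0]) ω) * F ω * H ω ∂Q = 0 := by
  have hFae : AEStronglyMeasurable F Q := (hFsm.mono hle1).aestronglyMeasurable
  have hHae : AEStronglyMeasurable H Q := (hHsm.mono hle2).aestronglyMeasurable
  have bF : ∀ᵐ ω ∂Q, |F ω| ≤ Cf := Eventually.of_forall hFb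
  have bH : ∀ᵐ ω ∂Q, |H ω| ≤ Ch := Eventually.of_forall hHb
  have bFb : ∀ᵐ ω ∂Q, |(Q[F|m0]) ω| ≤ ((Cf.toNNReal : ℝ)) := stmt5_bdd_condexp bF
  have bHb : ∀ᵐ ω ∂Q, |(Q[H|m0]) ω| ≤ ((Ch.toNNReal : ℝ)) := stmt5_bdd_condexp bH
  have hFbae : AEStronglyMeasurable (Q[F|m0]) Q :=
    (stronglyMeasurable_condExp.mono hle0).aestronglyMeasurable
  have hHbae : AEStronglyMeasurable (Q[H|m0]) Q :=
    (stronglyMeasurable_condExp.mono hle0).aestronglyMeasurable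
  have hFi : Integrable F Q := stmt5_int_of_bdd hFae bF
  have hHi : Integrable H Q := stmt5_int_of_bdd hHae bH
  have hai : Integrable (Q[g|m1]) Q := integrable_condExp
  have hbi : Integrable (Q[g|m2]) Q := integrable_condExp
  have hci' : Integrable (Q[g|m0]) Q := integrable_condExp
  -- integrable products
  have i_gHF : Integrable (fun ω => g ω * H ω * F ω) Q := stmt5_int3 hgi hHae bH hFae bF
  have i_gHFb : Integrable (fun ω => g ω * H ω * (Q[F|m0]) ω) Q :=
    stmt5_int3 hgi hHae bH hFbae bFb
  have i_gHbF : Integrable (fun ω => g ω * (Q[H|m0]) ω * F ω) Q :=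
    stmt5_int3 hgi hHbae bHb hFae bF
  have i_gHbFb : Integrable (fun ω => g ω * (Q[H|m0]) ω * (Q[F|m0]) ω) Q :=
    stmt5_int3 hgi hHbae bHb hFbae bFb
  have i_aFH : Integrable (fun ω => (Q[g|m1]) ω * F ω * H ω) Q :=
    stmt5_int3 hai hFae bF hHae bH
  have i_bFH : Integrable (fun ω => (Q[g|m2]) ω * F ω * H ω) Q :=
    stmt5_int3 hbi hFae bF hHae bH
  have i_cFH : Integrable (fun ω => (Q[g|m0]) ω * F ω * H ω) Q :=
    stmt5_int3 hci' hFae bF hHae bH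
  -- E1 : expansion of the orthogonality relation
  have i_s1 : Integrable (fun ω => g ω * H ω * F ω - g ω * H ω * (Q[F|m0]) ω) Q :=
    i_gHF.sub i_gHFb
  have i_s2 : Integrable
      (fun ω => g ω * (Q[H|m0]) ω * F ω - g ω * (Q[H|m0]) ω * (Q[F|m0]) ω) Q :=
    i_gHbF.sub i_gHbFb
  have h1 : ∫ ω, ((g ω * H ω * F ω - g ω * H ω * (Q[F|m0]) ω) -
      (g ω * (Q[H|m0]) ω * F ω - g ω * (Q[H|m0]) ω * (Q[F|m0]) ω)) ∂Q = 0 := by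
    rw [show (fun ω => (g ω * H ω * F ω - g ω * H ω * (Q[F|m0]) ω) -
      (g ω * (Q[H|m0]) ω * F ω - g ω * (Q[H|m0]) ω * (Q[F|m0]) ω)) =
      fun ω => g ω * (H ω - (Q[H|m0]) ω) * (F ω - (Q[F|m0]) ω) from funext fun ω => by ring]
    exact horth0
  have h2 : ∫ ω, ((g ω * H ω * F ω - g ω * H ω * (Q[F|m0]) ω) -
        (g ω * (Q[H|m0]) ω * F ω - g ω * (Q[H|m0]) ω * (Q[F|m0]) ω)) ∂Q
      = ∫ ω, (g ω * H ω * F ω - g ω * H ω * (Q[F|m0]) ω) ∂Q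
        - ∫ ω, (g ω * (Q[H|m0]) ω * F ω - g ω * (Q[H|m0]) ω * (Q[F|m0]) ω) ∂Q :=
    integral_sub i_s1 i_s2
  have h3 : ∫ ω, (g ω * H ω * F ω - g ω * H ω * (Q[F|m0]) ω) ∂Q
      = ∫ ω, g ω * H ω * F ω ∂Q - ∫ ω, g ω * H ω * (Q[F|m0]) ω ∂Q :=
    integral_sub i_gHF i_gHFb
  have h4 : ∫ ω, (g ω * (Q[H|m0]) ω * F ω - g ω * (Q[H|m0]) ω * (Q[F|m0]) ω) ∂Q
      = ∫ ω, g ω * (Q[H|m0]) ω * F ω ∂Q - ∫ ω, g ω * (Q[H|m0]) ω * (Q[F|m0]) ω ∂Q :=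
    integral_sub i_gHbF i_gHbFb
  -- E2 : ∫ g·Hb·F = ∫ a·F·Hb
  have E2 : ∫ ω, g ω * (Q[H|m0]) ω * F ω ∂Q
      = ∫ ω, (Q[g|m1]) ω * F ω * (Q[H|m0]) ω ∂Q := by
    have p2 := stmt5_proj hle1 (fun ω => F ω * (Q[H|m0]) ω) g
      (hFsm.mul (stronglyMeasurable_condExp.mono hle01)) hgi
      ((stmt5_int3 hgi hFae bF hHbae bHb).congr (Eventually.of_forall fun ω => by
        dsimp only; try ring))
    calc ∫ ω, g ω * (Q[H|m0]) ω * F ω ∂Q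
        = ∫ ω, F ω * (Q[H|m0]) ω * g ω ∂Q :=
          integral_congr_ae (Eventually.of_forall fun ω => by ring)
      _ = ∫ ω, F ω * (Q[H|m0]) ω * (Q[g|m1]) ω ∂Q := p2
      _ = ∫ ω, (Q[g|m1]) ω * F ω * (Q[H|m0]) ω ∂Q :=
          integral_congr_ae (Eventually.of_forall fun ω => by ring)
  -- E3 : ∫ a·F·H = ∫ a·F·Hb
  have E3 : ∫ ω, (Q[g|m1]) ω * F ω * H ω ∂Q
      = ∫ ω, (Q[g|m1]) ω * F ω * (Q[H|m0]) ω ∂Q := by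
    have p3 := stmt5_proj hle1 (fun ω => (Q[g|m1]) ω * F ω) H
      (stronglyMeasurable_condExp.mul hFsm) hHi
      ((stmt5_int3 hai hFae bF hHae bH).congr (Eventually.of_forall fun ω => by
        dsimp only; try ring))
    calc ∫ ω, (Q[g|m1]) ω * F ω * H ω ∂Q
        = ∫ ω, (Q[g|m1]) ω * F ω * (Q[H|m1]) ω ∂Q := p3
      _ = ∫ ω, (Q[g|m1]) ω * F ω * (Q[H|m0]) ω ∂Q :=
          integral_congr_ae (hsym.mono fun ω hω => by dsimp only; rw [hω])
  -- E4 : ∫ b·F·H = ∫ b·H·Fb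
  have E4 : ∫ ω, (Q[g|m2]) ω * F ω * H ω ∂Q
      = ∫ ω, (Q[g|m2]) ω * H ω * (Q[F|m0]) ω ∂Q := by
    have p4 := stmt5_proj hle2 (fun ω => (Q[g|m2]) ω * H ω) F
      (stronglyMeasurable_condExp.mul hHsm) hFi
      ((stmt5_int3 hbi hHae bH hFae bF).congr (Eventually.of_forall fun ω => by
        dsimp only; try ring))
    calc ∫ ω, (Q[g|m2]) ω * F ω * H ω ∂Q
        = ∫ ω, (Q[g|m2]) ω * H ω * F ω ∂Q :=
          integral_congr_ae (Eventually.of_forall fun ω => by ring)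
      _ = ∫ ω, (Q[g|m2]) ω * H ω * (Q[F|m2]) ω ∂Q := p4
      _ = ∫ ω, (Q[g|m2]) ω * H ω * (Q[F|m0]) ω ∂Q :=
          integral_congr_ae (hci.mono fun ω hω => by dsimp only; rw [hω])
  -- E5 : ∫ g·H·Fb = ∫ b·H·Fb
  have E5 : ∫ ω, g ω * H ω * (Q[F|m0]) ω ∂Q
      = ∫ ω, (Q[g|m2]) ω * H ω * (Q[F|m0]) ω ∂Q := by
    have p5 := stmt5_proj hle2 (fun ω => (Q[F|m0]) ω * H ω) g
      ((stronglyMeasurable_condExp.mono hle02).mul hHsm) hgi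
      ((stmt5_int3 hgi hFbae bFb hHae bH).congr (Eventually.of_forall fun ω => by
        dsimp only; try ring))
    calc ∫ ω, g ω * H ω * (Q[F|m0]) ω ∂Q
        = ∫ ω, (Q[F|m0]) ω * H ω * g ω ∂Q :=
          integral_congr_ae (Eventually.of_forall fun ω => by ring)
      _ = ∫ ω, (Q[F|m0]) ω * H ω * (Q[g|m2]) ω ∂Q := p5
      _ = ∫ ω, (Q[g|m2]) ω * H ω * (Q[F|m0]) ω ∂Q :=
          integral_congr_ae (Eventually.of_forall fun ω => by ring)
  -- E6 : ∫ c·F·H = ∫ c·Fb·Hb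
  have E6 : ∫ ω, (Q[g|m0]) ω * F ω * H ω ∂Q
      = ∫ ω, (Q[g|m0]) ω * (Q[F|m0]) ω * (Q[H|m0]) ω ∂Q := by
    have p6a := stmt5_proj hle2 (fun ω => (Q[g|m0]) ω * H ω) F
      ((stronglyMeasurable_condExp.mono hle02).mul hHsm) hFi
      ((stmt5_int3 hci' hHae bH hFae bF).congr (Eventually.of_forall fun ω => by
        dsimp only; try ring))
    have p6b := stmt5_proj hle0 (fun ω => (Q[g|m0]) ω * (Q[F|m0]) ω) H
      (stronglyMeasurable_condExp.mul stronglyMeasurable_condExp) hHi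
      ((stmt5_int3 hci' hFbae bFb hHae bH).congr (Eventually.of_forall fun ω => by
        dsimp only; try ring))
    calc ∫ ω, (Q[g|m0]) ω * F ω * H ω ∂Q
        = ∫ ω, (Q[g|m0]) ω * H ω * F ω ∂Q :=
          integral_congr_ae (Eventually.of_forall fun ω => by ring)
      _ = ∫ ω, (Q[g|m0]) ω * H ω * (Q[F|m2]) ω ∂Q := p6a
      _ = ∫ ω, (Q[g|m0]) ω * H ω * (Q[F|m0]) ω ∂Q :=
          integral_congr_ae (hci.mono fun ω hω => by dsimp only; rw [hω])
      _ = ∫ ω, (Q[g|m0]) ω * (Q[F|m0]) ω * H ω ∂Q :=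
          integral_congr_ae (Eventually.of_forall fun ω => by ring)
      _ = ∫ ω, (Q[g|m0]) ω * (Q[F|m0]) ω * (Q[H|m0]) ω ∂Q := p6b
  -- E7 : ∫ g·Hb·Fb = ∫ c·Fb·Hb
  have E7 : ∫ ω, g ω * (Q[H|m0]) ω * (Q[F|m0]) ω ∂Q
      = ∫ ω, (Q[g|m0]) ω * (Q[F|m0]) ω * (Q[H|m0]) ω ∂Q := by
    have p7 := stmt5_proj hle0 (fun ω => (Q[H|m0]) ω * (Q[F|m0]) ω) g
      (stronglyMeasurable_condExp.mul stronglyMeasurable_condExp) hgi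
      ((stmt5_int3 hgi hHbae bHb hFbae bFb).congr (Eventually.of_forall fun ω => by
        dsimp only; try ring))
    calc ∫ ω, g ω * (Q[H|m0]) ω * (Q[F|m0]) ω ∂Q
        = ∫ ω, (Q[H|m0]) ω * (Q[F|m0]) ω * g ω ∂Q :=
          integral_congr_ae (Eventually.of_forall fun ω => by ring)
      _ = ∫ ω, (Q[H|m0]) ω * (Q[F|m0]) ω * (Q[g|m0]) ω ∂Q := p7
      _ = ∫ ω, (Q[g|m0]) ω * (Q[F|m0]) ω * (Q[H|m0]) ω ∂Q :=
          integral_congr_ae (Eventually.of_forall fun ω => by ring)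
  -- assemble
  have i_t1 : Integrable (fun ω => g ω * H ω * F ω - (Q[g|m1]) ω * F ω * H ω) Q :=
    i_gHF.sub i_aFH
  have t1 : ∫ ω, (g ω * H ω * F ω - (Q[g|m1]) ω * F ω * H ω) ∂Q
      = ∫ ω, g ω * H ω * F ω ∂Q - ∫ ω, (Q[g|m1]) ω * F ω * H ω ∂Q :=
    integral_sub i_gHF i_aFH
  have i_t2 : Integrable (fun ω =>
      (g ω * H ω * F ω - (Q[g|m1]) ω * F ω * H ω) - (Q[g|m2]) ω * F ω * H ω) Q :=
    i_t1.sub i_bFH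
  have t2 : ∫ ω, ((g ω * H ω * F ω - (Q[g|m1]) ω * F ω * H ω) - (Q[g|m2]) ω * F ω * H ω) ∂Q
      = ∫ ω, (g ω * H ω * F ω - (Q[g|m1]) ω * F ω * H ω) ∂Q
        - ∫ ω, (Q[g|m2]) ω * F ω * H ω ∂Q :=
    integral_sub i_t1 i_bFH
  have t3 : ∫ ω, (((g ω * H ω * F ω - (Q[g|m1]) ω * F ω * H ω) - (Q[g|m2]) ω * F ω * H ω)
        + (Q[g|m0]) ω * F ω * H ω) ∂Q
      = ∫ ω, ((g ω * H ω * F ω - (Q[g|m1]) ω * F ω * H ω) - (Q[g|m2]) ω * F ω * H ω) ∂Q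
        + ∫ ω, (Q[g|m0]) ω * F ω * H ω ∂Q :=
    integral_add i_t2 i_cFH
  have start : ∫ ω, (g ω - (Q[g|m1]) ω - (Q[g|m2]) ω + (Q[g|m0]) ω) * F ω * H ω ∂Q
      = ∫ ω, (((g ω * H ω * F ω - (Q[g|m1]) ω * F ω * H ω) - (Q[g|m2]) ω * F ω * H ω)
        + (Q[g|m0]) ω * F ω * H ω) ∂Q :=
    integral_congr_ae (Eventually.of_forall fun ω => by ring)
  rw [start, t3, t2, t1]
  linarith [h1, h2, h3, h4, E2, E3, E4, E5, E6, E7]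

end Stmt5Key

section Stmt5Sym

lemma stmt5_sym {Ω α β γ : Type*} [mΩ : MeasurableSpace Ω] [MeasurableSpace α]
    [MeasurableSpace β] [MeasurableSpace γ]
    (Q : Measure Ω) [IsProbabilityMeasure Q]
    (U : Ω → α) (Z : Ω → β) (X : Ω → γ)
    (hUX : Measurable fun ω => (U ω, X ω)) (hZX : Measurable fun ω => (Z ω, X ω))
    (hX : Measurable X)
    (hCI : ∀ f : α × γ → ℝ, Measurable f → (∃ C, ∀ p, |f p| ≤ C) →
      Q[fun ω => f (U ω, X ω)|MeasurableSpace.comap (fun ω => (Z ω, X ω)) inferInstance]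
        =ᵐ[Q] Q[fun ω => f (U ω, X ω)|MeasurableSpace.comap X inferInstance])
    (h : β × γ → ℝ) (hh : Measurable h) {Ch : ℝ} (hCh : ∀ p, |h p| ≤ Ch) :
    Q[fun ω => h (Z ω, X ω)|MeasurableSpace.comap (fun ω => (U ω, X ω)) inferInstance]
      =ᵐ[Q] Q[fun ω => h (Z ω, X ω)|MeasurableSpace.comap X inferInstance] := by
  have hle1 : MeasurableSpace.comap (fun ω => (U ω, X ω)) inferInstance ≤ mΩ := hUX.comap_le
  have hle2 : MeasurableSpace.comap (fun ω => (Z ω, X ω)) inferInstance ≤ mΩ := hZX.comap_le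
  have hle0 : MeasurableSpace.comap X inferInstance ≤ mΩ := hX.comap_le
  have hle01 : MeasurableSpace.comap X inferInstance
      ≤ MeasurableSpace.comap (fun ω => (U ω, X ω)) inferInstance :=
    Measurable.comap_le (measurable_snd.comp (Measurable.of_comap_le le_rfl))
  have hHm : Measurable fun ω => h (Z ω, X ω) := hh.comp hZX
  have hHae : AEStronglyMeasurable (fun ω => h (Z ω, X ω)) Q := hHm.aestronglyMeasurable
  have bH : ∀ᵐ ω ∂Q, |h (Z ω, X ω)| ≤ Ch := Eventually.of_forall fun ω => hCh _
  have bW : ∀ᵐ ω ∂Q, |(Q[fun ω => h (Z ω, X ω)|MeasurableSpace.comap X inferInstance]) ω|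
      ≤ ((Ch.toNNReal : ℝ)) := stmt5_bdd_condexp bH
  have hWae : AEStronglyMeasurable
      (Q[fun ω => h (Z ω, X ω)|MeasurableSpace.comap X inferInstance]) Q :=
    (stronglyMeasurable_condExp.mono hle0).aestronglyMeasurable
  have hHi : Integrable (fun ω => h (Z ω, X ω)) Q := stmt5_int_of_bdd hHae bH
  have hHsm2 : StronglyMeasurable[MeasurableSpace.comap (fun ω => (Z ω, X ω)) inferInstance]
      (fun ω => h (Z ω, X ω)) :=
    (hh.comp (Measurable.of_comap_le le_rfl)).stronglyMeasurable
  refine (ae_eq_condExp_of_forall_setIntegral_eq hle1 hHi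
    (fun s _ _ => integrable_condExp.integrableOn) ?_
    (stronglyMeasurable_condExp.mono hle01).aestronglyMeasurable).symm
  intro s hs _
  rw [MeasurableSpace.measurableSet_comap] at hs
  obtain ⟨E, hE, rfl⟩ := hs
  have main : ∀ ⦃E' : Set (α × γ)⦄, MeasurableSet E' →
      ∫ ω in (fun ω => (U ω, X ω)) ⁻¹' E',
        ((Q[fun ω => h (Z ω, X ω)|MeasurableSpace.comap X inferInstance]) ω
          - h (Z ω, X ω)) ∂Q = 0 := by
    have hWHi : Integrable (fun ω =>
        (Q[fun ω => h (Z ω, X ω)|MeasurableSpace.comap X inferInstance]) ω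
          - h (Z ω, X ω)) Q := integrable_condExp.sub hHi
    refine stmt5_preimage_integral_zero hUX hWHi
      generateFrom_prod.symm isPiSystem_prod ?_ ?_
    · have htot : ∫ ω, (Q[fun ω => h (Z ω, X ω)|MeasurableSpace.comap X inferInstance]) ω ∂Q
          = ∫ ω, h (Z ω, X ω) ∂Q := integral_condExp hle0
      rw [integral_sub integrable_condExp hHi, htot, sub_self]
    · rintro t ⟨A, hA, B, hB, rfl⟩
      have hABm : MeasurableSet (A ×ˢ B) := (hA : MeasurableSet A).prod (hB : MeasurableSet B)
      have hf'm : Measurable ((A ×ˢ B).indicator fun _ => (1 : ℝ)) :=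
        measurable_const.indicator hABm
      have hf'b : ∀ p, |(A ×ˢ B).indicator (fun _ => (1 : ℝ)) p| ≤ 1 := fun p => by
        by_cases hp : p ∈ A ×ˢ B <;>
          simp [Set.indicator_of_mem, Set.indicator_of_notMem, hp]
      have hF'm : Measurable fun ω => (A ×ˢ B).indicator (fun _ => (1 : ℝ)) (U ω, X ω) :=
        hf'm.comp hUX
      have hF'ae := hF'm.aestronglyMeasurable (μ := Q)
      have bF' : ∀ᵐ ω ∂Q, |(A ×ˢ B).indicator (fun _ => (1 : ℝ)) (U ω, X ω)| ≤ 1 :=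
        Eventually.of_forall fun ω => hf'b _
      have hF'i : Integrable (fun ω => (A ×ˢ B).indicator (fun _ => (1 : ℝ)) (U ω, X ω)) Q :=
        stmt5_int_of_bdd hF'ae bF'
      have i1 : Integrable (fun ω => (A ×ˢ B).indicator (fun _ => (1 : ℝ)) (U ω, X ω)
          * (Q[fun ω => h (Z ω, X ω)|MeasurableSpace.comap X inferInstance]) ω) Q :=
        stmt5_int_mul_bdd hF'i hWae bW
      have i2 : Integrable (fun ω => (A ×ˢ B).indicator (fun _ => (1 : ℝ)) (U ω, X ω)
          * h (Z ω, X ω)) Q := stmt5_int_mul_bdd hF'i hHae bH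
      have c1 : ∫ ω, (A ×ˢ B).indicator (fun _ => (1 : ℝ)) (U ω, X ω)
            * (Q[fun ω => h (Z ω, X ω)|MeasurableSpace.comap X inferInstance]) ω ∂Q
          = ∫ ω, (Q[fun ω => (A ×ˢ B).indicator (fun _ => (1 : ℝ)) (U ω, X ω)|
              MeasurableSpace.comap X inferInstance]) ω
            * (Q[fun ω => h (Z ω, X ω)|MeasurableSpace.comap X inferInstance]) ω ∂Q := by
        calc ∫ ω, (A ×ˢ B).indicator (fun _ => (1 : ℝ)) (U ω, X ω)
              * (Q[fun ω => h (Z ω, X ω)|MeasurableSpace.comap X inferInstance]) ω ∂Q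
            = ∫ ω, (Q[fun ω => h (Z ω, X ω)|MeasurableSpace.comap X inferInstance]) ω
              * (A ×ˢ B).indicator (fun _ => (1 : ℝ)) (U ω, X ω) ∂Q :=
              integral_congr_ae (Eventually.of_forall fun ω => by ring)
          _ = ∫ ω, (Q[fun ω => h (Z ω, X ω)|MeasurableSpace.comap X inferInstance]) ω
              * (Q[fun ω => (A ×ˢ B).indicator (fun _ => (1 : ℝ)) (U ω, X ω)|
                MeasurableSpace.comap X inferInstance]) ω ∂Q :=
              stmt5_proj hle0 _ _ stronglyMeasurable_condExp hF'i
                (stmt5_int_mul_bdd integrable_condExp hF'ae bF')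
          _ = ∫ ω, (Q[fun ω => (A ×ˢ B).indicator (fun _ => (1 : ℝ)) (U ω, X ω)|
                MeasurableSpace.comap X inferInstance]) ω
              * (Q[fun ω => h (Z ω, X ω)|MeasurableSpace.comap X inferInstance]) ω ∂Q :=
              integral_congr_ae (Eventually.of_forall fun ω => by ring)
      have c2 : ∫ ω, (A ×ˢ B).indicator (fun _ => (1 : ℝ)) (U ω, X ω) * h (Z ω, X ω) ∂Q
          = ∫ ω, (Q[fun ω => (A ×ˢ B).indicator (fun _ => (1 : ℝ)) (U ω, X ω)|
              MeasurableSpace.comap X inferInstance]) ω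
            * (Q[fun ω => h (Z ω, X ω)|MeasurableSpace.comap X inferInstance]) ω ∂Q := by
        calc ∫ ω, (A ×ˢ B).indicator (fun _ => (1 : ℝ)) (U ω, X ω) * h (Z ω, X ω) ∂Q
            = ∫ ω, h (Z ω, X ω) * (A ×ˢ B).indicator (fun _ => (1 : ℝ)) (U ω, X ω) ∂Q :=
              integral_congr_ae (Eventually.of_forall fun ω => by ring)
          _ = ∫ ω, h (Z ω, X ω)
              * (Q[fun ω => (A ×ˢ B).indicator (fun _ => (1 : ℝ)) (U ω, X ω)|
                MeasurableSpace.comap (fun ω => (Z ω, X ω)) inferInstance]) ω ∂Q :=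
              stmt5_proj hle2 _ _ hHsm2 hF'i (stmt5_int_mul_bdd hHi hF'ae bF')
          _ = ∫ ω, h (Z ω, X ω)
              * (Q[fun ω => (A ×ˢ B).indicator (fun _ => (1 : ℝ)) (U ω, X ω)|
                MeasurableSpace.comap X inferInstance]) ω ∂Q :=
              integral_congr_ae ((hCI _ hf'm ⟨1, hf'b⟩).mono fun ω hω => by
                dsimp only; rw [hω])
          _ = ∫ ω, (Q[fun ω => (A ×ˢ B).indicator (fun _ => (1 : ℝ)) (U ω, X ω)|
                MeasurableSpace.comap X inferInstance]) ω * h (Z ω, X ω) ∂Q :=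
              integral_congr_ae (Eventually.of_forall fun ω => by ring)
          _ = ∫ ω, (Q[fun ω => (A ×ˢ B).indicator (fun _ => (1 : ℝ)) (U ω, X ω)|
                MeasurableSpace.comap X inferInstance]) ω
              * (Q[fun ω => h (Z ω, X ω)|MeasurableSpace.comap X inferInstance]) ω ∂Q :=
              stmt5_proj hle0 _ _ stronglyMeasurable_condExp hHi
                (stmt5_int_mul_bdd integrable_condExp hHae bH)
      calc ∫ ω in (fun ω => (U ω, X ω)) ⁻¹' (A ×ˢ B),
            ((Q[fun ω => h (Z ω, X ω)|MeasurableSpace.comap X inferInstance]) ω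
              - h (Z ω, X ω)) ∂Q
          = ∫ ω, Set.indicator ((fun ω => (U ω, X ω)) ⁻¹' (A ×ˢ B))
              (fun ω => (Q[fun ω => h (Z ω, X ω)|MeasurableSpace.comap X inferInstance]) ω
                - h (Z ω, X ω)) ω ∂Q := (integral_indicator (hUX hABm)).symm
        _ = ∫ ω, ((A ×ˢ B).indicator (fun _ => (1 : ℝ)) (U ω, X ω)
              * (Q[fun ω => h (Z ω, X ω)|MeasurableSpace.comap X inferInstance]) ω
            - (A ×ˢ B).indicator (fun _ => (1 : ℝ)) (U ω, X ω) * h (Z ω, X ω)) ∂Q := by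
            refine integral_congr_ae (Eventually.of_forall fun ω => ?_)
            dsimp only
            by_cases hω : (U ω, X ω) ∈ A ×ˢ B
            · rw [Set.indicator_of_mem (by exact hω), Set.indicator_of_mem hω]
              try rw [Set.indicator_of_mem hω]
              ring
            · rw [Set.indicator_of_notMem (by exact hω), Set.indicator_of_notMem hω]
              try rw [Set.indicator_of_notMem hω]
              ring
        _ = ∫ ω, (A ×ˢ B).indicator (fun _ => (1 : ℝ)) (U ω, X ω)
              * (Q[fun ω => h (Z ω, X ω)|MeasurableSpace.comap X inferInstance]) ω ∂Q
            - ∫ ω, (A ×ˢ B).indicator (fun _ => (1 : ℝ)) (U ω, X ω) * h (Z ω, X ω) ∂Q :=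
            integral_sub i1 i2
        _ = 0 := by rw [c1, c2, sub_self]
  have hmain := main hE
  rw [integral_sub integrable_condExp.integrableOn hHi.integrableOn] at hmain
  linarith

end Stmt5Sym

/-- Under conditional independence `U ⊥ Z | X` and orthogonality of `g` to all products
`(h(Z,X) − E[h|X])·(f(U,X) − E[f|X])`, the score decomposes as
`g = E[g|U,X] + E[g|Z,X] − E[g|X]` a.s. -/
theorem stmt5 {Ω α β γ : Type*} [mΩ : MeasurableSpace Ω]
    [MeasurableSpace α] [MeasurableSpace β] [MeasurableSpace γ]
    (Q : Measure Ω) [IsProbabilityMeasure Q]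
    (U : Ω → α) (Z : Ω → β) (X : Ω → γ)
    (hm : mΩ = MeasurableSpace.comap (fun ω => (U ω, Z ω, X ω)) inferInstance)
    (hCI : ∀ f : α × γ → ℝ, Measurable f → (∃ C, ∀ p, |f p| ≤ C) →
      Q[fun ω => f (U ω, X ω) | MeasurableSpace.comap (fun ω => (Z ω, X ω)) inferInstance]
        =ᵐ[Q] Q[fun ω => f (U ω, X ω) | MeasurableSpace.comap X inferInstance])
    (g : Ω → ℝ) (hg : MemLp g 2 Q)
    (horth : ∀ (h : β × γ → ℝ) (f : α × γ → ℝ), Measurable h → Measurable f →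
      (∃ C, ∀ p, |h p| ≤ C) → (∃ C, ∀ p, |f p| ≤ C) →
      ∫ ω, g ω
        * (h (Z ω, X ω)
            - (Q[fun ω' => h (Z ω', X ω') | MeasurableSpace.comap X inferInstance]) ω)
        * (f (U ω, X ω)
            - (Q[fun ω' => f (U ω', X ω') | MeasurableSpace.comap X inferInstance]) ω) ∂Q
        = 0) :
    g =ᵐ[Q] fun ω =>
      (Q[g | MeasurableSpace.comap (fun ω' => (U ω', X ω')) inferInstance]) ω
      + (Q[g | MeasurableSpace.comap (fun ω' => (Z ω', X ω')) inferInstance]) ω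
      - (Q[g | MeasurableSpace.comap X inferInstance]) ω := by
  have hT : Measurable fun ω => (U ω, Z ω, X ω) := Measurable.of_comap_le hm.ge
  have hU : Measurable U := measurable_fst.comp hT
  have hZ : Measurable Z := (measurable_fst.comp measurable_snd).comp hT
  have hX : Measurable X := (measurable_snd.comp measurable_snd).comp hT
  have hUX : Measurable fun ω => (U ω, X ω) := hU.prodMk hX
  have hZX : Measurable fun ω => (Z ω, X ω) := hZ.prodMk hX
  have hle1 : MeasurableSpace.comap (fun ω => (U ω, X ω)) inferInstance ≤ mΩ := hUX.comap_le
  have hle2 : MeasurableSpace.comap (fun ω => (Z ω, X ω)) inferInstance ≤ mΩ := hZX.comap_le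
  have hle0 : MeasurableSpace.comap X inferInstance ≤ mΩ := hX.comap_le
  have hle01 : MeasurableSpace.comap X inferInstance
      ≤ MeasurableSpace.comap (fun ω => (U ω, X ω)) inferInstance :=
    Measurable.comap_le (measurable_snd.comp (Measurable.of_comap_le le_rfl))
  have hle02 : MeasurableSpace.comap X inferInstance
      ≤ MeasurableSpace.comap (fun ω => (Z ω, X ω)) inferInstance :=
    Measurable.comap_le (measurable_snd.comp (Measurable.of_comap_le le_rfl))
  have hgi : Integrable g Q := hg.integrable one_le_two
  have key : ∀ (f : α × γ → ℝ) (h : β × γ → ℝ), Measurable f → Measurable h →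
      (∃ C, ∀ p, |f p| ≤ C) → (∃ C, ∀ p, |h p| ≤ C) →
      ∫ ω, (g ω - (Q[g|MeasurableSpace.comap (fun ω' => (U ω', X ω')) inferInstance]) ω
        - (Q[g|MeasurableSpace.comap (fun ω' => (Z ω', X ω')) inferInstance]) ω
        + (Q[g|MeasurableSpace.comap X inferInstance]) ω)
        * f (U ω, X ω) * h (Z ω, X ω) ∂Q = 0 := by
    rintro f h hf hh ⟨Cf, hCf⟩ ⟨Ch, hCh⟩
    exact stmt5_key hle0 hle1 hle2 hle01 hle02 g _ _ hgi
      ((hf.comp (Measurable.of_comap_le le_rfl)).stronglyMeasurable)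
      ((hh.comp (Measurable.of_comap_le le_rfl)).stronglyMeasurable)
      (fun ω => hCf _) (fun ω => hCh _)
      (hCI f hf ⟨Cf, hCf⟩)
      (stmt5_sym Q U Z X hUX hZX hX hCI h hh hCh)
      (horth h f hh hf ⟨Ch, hCh⟩ ⟨Cf, hCf⟩)
  have hri : Integrable (fun ω =>
      g ω - (Q[g|MeasurableSpace.comap (fun ω' => (U ω', X ω')) inferInstance]) ω
      - (Q[g|MeasurableSpace.comap (fun ω' => (Z ω', X ω')) inferInstance]) ω
      + (Q[g|MeasurableSpace.comap X inferInstance]) ω) Q :=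
    ((hgi.sub integrable_condExp).sub integrable_condExp).add integrable_condExp
  have i1 : Integrable (fun ω =>
      g ω - (Q[g|MeasurableSpace.comap (fun ω' => (U ω', X ω')) inferInstance]) ω) Q :=
    hgi.sub integrable_condExp
  have i2 : Integrable (fun ω =>
      g ω - (Q[g|MeasurableSpace.comap (fun ω' => (U ω', X ω')) inferInstance]) ω
      - (Q[g|MeasurableSpace.comap (fun ω' => (Z ω', X ω')) inferInstance]) ω) Q :=
    i1.sub integrable_condExp
  have h0 : ∫ ω, (g ω
      - (Q[g|MeasurableSpace.comap (fun ω' => (U ω', X ω')) inferInstance]) ω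
      - (Q[g|MeasurableSpace.comap (fun ω' => (Z ω', X ω')) inferInstance]) ω
      + (Q[g|MeasurableSpace.comap X inferInstance]) ω) ∂Q = 0 := by
    have e3 : ∫ ω, (g ω
        - (Q[g|MeasurableSpace.comap (fun ω' => (U ω', X ω')) inferInstance]) ω
        - (Q[g|MeasurableSpace.comap (fun ω' => (Z ω', X ω')) inferInstance]) ω
        + (Q[g|MeasurableSpace.comap X inferInstance]) ω) ∂Q
        = ∫ ω, (g ω
          - (Q[g|MeasurableSpace.comap (fun ω' => (U ω', X ω')) inferInstance]) ω
          - (Q[g|MeasurableSpace.comap (fun ω' => (Z ω', X ω')) inferInstance]) ω) ∂Q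
        + ∫ ω, (Q[g|MeasurableSpace.comap X inferInstance]) ω ∂Q :=
      integral_add i2 integrable_condExp
    have e2 : ∫ ω, (g ω
        - (Q[g|MeasurableSpace.comap (fun ω' => (U ω', X ω')) inferInstance]) ω
        - (Q[g|MeasurableSpace.comap (fun ω' => (Z ω', X ω')) inferInstance]) ω) ∂Q
        = ∫ ω, (g ω
          - (Q[g|MeasurableSpace.comap (fun ω' => (U ω', X ω')) inferInstance]) ω) ∂Q
        - ∫ ω, (Q[g|MeasurableSpace.comap (fun ω' => (Z ω', X ω')) inferInstance]) ω ∂Q :=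
      integral_sub i1 integrable_condExp
    have e1 : ∫ ω, (g ω
        - (Q[g|MeasurableSpace.comap (fun ω' => (U ω', X ω')) inferInstance]) ω) ∂Q
        = ∫ ω, g ω ∂Q
        - ∫ ω, (Q[g|MeasurableSpace.comap (fun ω' => (U ω', X ω')) inferInstance]) ω ∂Q :=
      integral_sub hgi integrable_condExp
    have ca : ∫ ω, (Q[g|MeasurableSpace.comap (fun ω' => (U ω', X ω')) inferInstance]) ω ∂Q
        = ∫ ω, g ω ∂Q := integral_condExp hle1
    have cb : ∫ ω, (Q[g|MeasurableSpace.comap (fun ω' => (Z ω', X ω')) inferInstance]) ω ∂Q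
        = ∫ ω, g ω ∂Q := integral_condExp hle2
    have cc : ∫ ω, (Q[g|MeasurableSpace.comap X inferInstance]) ω ∂Q
        = ∫ ω, g ω ∂Q := integral_condExp hle0
    linarith
  have hz : ∀ ⦃E : Set (α × β × γ)⦄, MeasurableSet E →
      ∫ ω in (fun ω => (U ω, Z ω, X ω)) ⁻¹' E, (g ω
        - (Q[g|MeasurableSpace.comap (fun ω' => (U ω', X ω')) inferInstance]) ω
        - (Q[g|MeasurableSpace.comap (fun ω' => (Z ω', X ω')) inferInstance]) ω
        + (Q[g|MeasurableSpace.comap X inferInstance]) ω) ∂Q = 0 := by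
    refine stmt5_preimage_integral_zero hT hri generateFrom_prod.symm isPiSystem_prod h0 ?_
    rintro t ⟨A, hA, D, hD, rfl⟩
    have hADm : MeasurableSet (A ×ˢ D) := (hA : MeasurableSet A).prod (hD : MeasurableSet D)
    have hkey := key (fun p => A.indicator (fun _ => (1 : ℝ)) p.1)
      (D.indicator fun _ => (1 : ℝ))
      ((measurable_const.indicator (hA : MeasurableSet A)).comp measurable_fst)
      (measurable_const.indicator (hD : MeasurableSet D))
      ⟨1, fun p => by
        by_cases hp : p.1 ∈ A <;>
          simp [Set.indicator_of_mem, Set.indicator_of_notMem, hp]⟩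
      ⟨1, fun p => by
        by_cases hp : p ∈ D <;>
          simp [Set.indicator_of_mem, Set.indicator_of_notMem, hp]⟩
    calc ∫ ω in (fun ω => (U ω, Z ω, X ω)) ⁻¹' (A ×ˢ D), (g ω
          - (Q[g|MeasurableSpace.comap (fun ω' => (U ω', X ω')) inferInstance]) ω
          - (Q[g|MeasurableSpace.comap (fun ω' => (Z ω', X ω')) inferInstance]) ω
          + (Q[g|MeasurableSpace.comap X inferInstance]) ω) ∂Q
        = ∫ ω, Set.indicator ((fun ω => (U ω, Z ω, X ω)) ⁻¹' (A ×ˢ D)) (fun ω => g ω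
          - (Q[g|MeasurableSpace.comap (fun ω' => (U ω', X ω')) inferInstance]) ω
          - (Q[g|MeasurableSpace.comap (fun ω' => (Z ω', X ω')) inferInstance]) ω
          + (Q[g|MeasurableSpace.comap X inferInstance]) ω) ω ∂Q :=
          (integral_indicator (hT hADm)).symm
      _ = ∫ ω, (g ω
          - (Q[g|MeasurableSpace.comap (fun ω' => (U ω', X ω')) inferInstance]) ω
          - (Q[g|MeasurableSpace.comap (fun ω' => (Z ω', X ω')) inferInstance]) ω
          + (Q[g|MeasurableSpace.comap X inferInstance]) ω)
          * (fun p : α × γ => A.indicator (fun _ => (1 : ℝ)) p.1) (U ω, X ω)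
          * D.indicator (fun _ => (1 : ℝ)) (Z ω, X ω) ∂Q := by
          refine integral_congr_ae (Eventually.of_forall fun ω => ?_)
          dsimp only
          by_cases h1 : (U ω, Z ω, X ω) ∈ A ×ˢ D
          · rw [Set.indicator_of_mem
              (show ω ∈ (fun ω => (U ω, Z ω, X ω)) ⁻¹' (A ×ˢ D) from h1)]
            have h1' : U ω ∈ A ∧ (Z ω, X ω) ∈ D := h1
            rw [Set.indicator_of_mem h1'.1, Set.indicator_of_mem h1'.2]
            ring
          · rw [Set.indicator_of_notMem
              (show ω ∉ (fun ω => (U ω, Z ω, X ω)) ⁻¹' (A ×ˢ D) from h1)]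
            have h1' : ¬(U ω ∈ A ∧ (Z ω, X ω) ∈ D) := h1
            rcases not_and_or.mp h1' with h2 | h2
            · rw [Set.indicator_of_notMem h2]; ring
            · rw [Set.indicator_of_notMem h2]; ring
      _ = 0 := hkey
  have hr0 : (fun ω => g ω
      - (Q[g|MeasurableSpace.comap (fun ω' => (U ω', X ω')) inferInstance]) ω
      - (Q[g|MeasurableSpace.comap (fun ω' => (Z ω', X ω')) inferInstance]) ω
      + (Q[g|MeasurableSpace.comap X inferInstance]) ω) =ᵐ[Q] 0 := by
    refine hri.ae_eq_zero_of_forall_setIntegral_eq_zero ?_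
    intro s hs _
    rw [hm, MeasurableSpace.measurableSet_comap] at hs
    obtain ⟨E, hE, rfl⟩ := hs
    exact hz hE
  filter_upwards [hr0] with ω hω
  simp only [Pi.zero_apply] at hω
  linarith
end

section
/- Let (T*, X) be random elements with T* taking values in a finite set 𝐓* and law Q̄, and let {C_i}_{i=1}^r be subsets of 𝐓*. Suppose there exists ε > 0 such that Q̄(T* = t* | X) ≥ ε almost surely for every t* ∈ 𝐓* with Q̄(T* = t*) > 0. Define A : ⊕_{i=1}^r L¹(P_X) → L¹(Q̄_{T*X}) by A(f)(t*, x) = Σ_{i=1}^r 1{t* ∈ C_i} f_i(x), where P_X is the law of X. Then the range of A is a closed subspace of L¹(Q̄_{T*X}). -/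
/-! Let `ν` be the law of `X`, `S` the set of types of positive probability and `M : ℝʳ → ℝ^S`
the incidence matrix, `(M c)ₜ = Σᵢ 1{t ∈ Cᵢ} cᵢ`, so that `A f = (M (f X))_{T*}` almost surely.
The two `L¹` norms are equivalent: `‖A f‖_{L¹(Q)} ≤ ‖M f‖_{L¹(ν)}` because `T* ∈ S` a.s., and
`ε ‖M f‖_{L¹(ν)} ≤ |S| ‖A f‖_{L¹(Q)}` because `Q(T* = t | X) ≥ ε` for `t ∈ S`. Hence if `A Fₙ → g`,
then `M Fₙ` is Cauchy in `L¹(ν; ℝ^S)`, with a limit `w`. For a pseudo-inverse `B` of `M`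
(`M B M = M`) the projection `M B` fixes every `M Fₙ`, hence also `w`; so `f := B w` has
`M f = w`, and `A f = g`. -/

open MeasureTheory Filter Matrix Topology
open scoped Classical BigOperators

theorem LinearMap.exists_comp_comp_eq_self {K V W : Type*} [Field K] [AddCommGroup V]
    [Module K V] [AddCommGroup W] [Module K W] (M : V →ₗ[K] W) :
    ∃ B : W →ₗ[K] V, ∀ v, M (B (M v)) = M v := by
  obtain ⟨π, hπ⟩ := (LinearMap.range M).subtype.exists_leftInverse_of_injective
    (Submodule.ker_subtype _)
  obtain ⟨σ, hσ⟩ := M.rangeRestrict.exists_rightInverse_of_surjective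
    (LinearMap.range_rangeRestrict M)
  refine ⟨σ ∘ₗ π, fun v => ?_⟩
  have hMσ : ∀ w : LinearMap.range M, M (σ w) = w := fun w => by
    simpa using congrArg Subtype.val (LinearMap.congr_fun hσ w)
  have hπM : π (M v) = ⟨M v, LinearMap.mem_range_self M v⟩ := by
    simpa using LinearMap.congr_fun hπ ⟨M v, LinearMap.mem_range_self M v⟩
  simp [hπM, hMσ]

section L1

variable {α E : Type*} [MeasurableSpace α] {μ : Measure α} [NormedAddCommGroup E]

theorem ae_eq_zero_of_integral_norm_le_of_tendsto {f : α → E} (hf : Integrable f μ)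
    {b : ℕ → ℝ} (hb : Tendsto b atTop (𝓝 0)) (hfb : ∀ n, ∫ x, ‖f x‖ ∂μ ≤ b n) :
    f =ᵐ[μ] 0 := by
  have hzero : ∫ x, ‖f x‖ ∂μ = 0 :=
    le_antisymm (ge_of_tendsto' hb hfb) (integral_nonneg fun _ => norm_nonneg _)
  filter_upwards [(integral_eq_zero_iff_of_nonneg (fun _ => norm_nonneg _) hf.norm).mp hzero]
    with x hx
  exact norm_eq_zero.mp hx

theorem integral_norm_sub_le_add {f g h : α → E} (hf : Integrable f μ) (hg : Integrable g μ)
    (hh : Integrable h μ) :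
    ∫ x, ‖f x - h x‖ ∂μ ≤ ∫ x, ‖f x - g x‖ ∂μ + ∫ x, ‖g x - h x‖ ∂μ := by
  refine (integral_mono (hf.sub hh).norm ((hf.sub hg).norm.add (hg.sub hh).norm)
    fun x => norm_sub_le_norm_sub_add_norm_sub _ _ _).trans_eq ?_
  exact integral_add (hf.sub hg).norm (hg.sub hh).norm

theorem exists_tendsto_integral_norm_sub_of_cauchy [CompleteSpace E] {u : ℕ → α → E}
    (hu : ∀ n, Integrable (u n) μ) {b : ℕ → ℝ} (hb : Tendsto b atTop (𝓝 0))
    (hcau : ∀ n m, ∫ x, ‖u n x - u m x‖ ∂μ ≤ b n + b m) :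
    ∃ v : α → E, StronglyMeasurable v ∧ Integrable v μ ∧
      Tendsto (fun n => ∫ x, ‖u n x - v x‖ ∂μ) atTop (𝓝 0) := by
  set U : ℕ → Lp E 1 μ := fun n => (hu n).toL1 (u n)
  have hdist : ∀ n (w : Lp E 1 μ), dist (U n) w = ∫ x, ‖u n x - w x‖ ∂μ := by
    intro n w
    rw [dist_eq_norm, L1.norm_eq_integral_norm]
    refine integral_congr_ae ?_
    filter_upwards [Lp.coeFn_sub (U n) w, Integrable.coeFn_toL1 (hu n)] with x hsub hU
    rw [hsub, Pi.sub_apply, hU]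
  have hU : CauchySeq U := by
    refine Metric.cauchySeq_iff'.mpr fun δ hδ => ?_
    obtain ⟨N, hN⟩ := eventually_atTop.mp (hb.eventually (gt_mem_nhds (half_pos hδ)))
    refine ⟨N, fun n hn => ?_⟩
    have hUN : ∫ x, ‖u n x - U N x‖ ∂μ = ∫ x, ‖u n x - u N x‖ ∂μ := by
      refine integral_congr_ae ?_
      filter_upwards [Integrable.coeFn_toL1 (hu N)] with x hx
      rw [hx]
    calc dist (U n) (U N) ≤ b n + b N := (hdist n _).trans_le (hUN ▸ hcau n N)
      _ < δ := by linarith [hN n hn, hN N le_rfl]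
  obtain ⟨w, hw⟩ := cauchySeq_tendsto_of_complete hU
  exact ⟨w, Lp.stronglyMeasurable w, L1.integrable_coeFn w,
    (tendsto_iff_dist_tendsto_zero.mp hw).congr fun n => hdist n w⟩

theorem ae_eq_comp_of_tendsto_integral_norm_sub {𝕜 : Type*} [NontriviallyNormedField 𝕜]
    [NormedSpace 𝕜 E] (P : E →L[𝕜] E) {w : ℕ → α → E} {v : α → E}
    (hw : ∀ n, Integrable (w n) μ) (hv : Integrable v μ) (hPw : ∀ n x, P (w n x) = w n x)
    (hlim : Tendsto (fun n => ∫ x, ‖w n x - v x‖ ∂μ) atTop (𝓝 0)) :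
    (fun x => P (v x)) =ᵐ[μ] v := by
  rw [← sub_ae_eq_zero]
  refine ae_eq_zero_of_integral_norm_le_of_tendsto ((P.integrable_comp hv).sub hv)
    (by simpa using hlim.const_mul ‖P - 1‖) fun n => ?_
  have hpt : ∀ x, ‖P (v x) - v x‖ ≤ ‖P - 1‖ * ‖w n x - v x‖ := fun x => by
    calc ‖P (v x) - v x‖ = ‖(P - 1) (w n x - v x)‖ := by
          rw [← norm_neg]; simp [hPw, map_sub]
      _ ≤ ‖P - 1‖ * ‖w n x - v x‖ := (P - 1).le_opNorm _
  rw [← integral_const_mul]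
  exact integral_mono ((P.integrable_comp hv).sub hv).norm
    (((hw n).sub hv).norm.const_mul _) hpt

theorem exists_tendsto_integral_norm_comp_sub_comp {V W : Type*} [NormedAddCommGroup V]
    [NormedSpace ℝ V] [NormedAddCommGroup W] [NormedSpace ℝ W] [FiniteDimensional ℝ W]
    (L : V →L[ℝ] W) {u : ℕ → α → V} (hu : ∀ n, Integrable (u n) μ) {b : ℕ → ℝ} {c : ℝ}
    (hb : Tendsto b atTop (𝓝 0))
    (hcau : ∀ n m, ∫ x, ‖L (u n x) - L (u m x)‖ ∂μ ≤ c * (b n + b m)) :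
    ∃ f : α → V, StronglyMeasurable f ∧ Integrable f μ ∧
      Tendsto (fun n => ∫ x, ‖L (u n x) - L (f x)‖ ∂μ) atTop (𝓝 0) := by
  have hLu : ∀ n, Integrable (fun x => L (u n x)) μ := fun n => L.integrable_comp (hu n)
  obtain ⟨w, hwm, hwi, hw⟩ := exists_tendsto_integral_norm_sub_of_cauchy hLu
    (by simpa using hb.const_mul c) fun n m => (hcau n m).trans_eq (mul_add _ _ _)
  obtain ⟨B, hB⟩ := (L : V →ₗ[ℝ] W).exists_comp_comp_eq_self
  set B' : W →L[ℝ] V := LinearMap.toContinuousLinearMap B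
  have hLB : (fun x => L (B' (w x))) =ᵐ[μ] w :=
    ae_eq_comp_of_tendsto_integral_norm_sub (L.comp B') hLu hwi (fun n x => hB _) hw
  refine ⟨fun x => B' (w x), B'.continuous.comp_stronglyMeasurable hwm, B'.integrable_comp hwi,
    hw.congr fun n => integral_congr_ae ?_⟩
  filter_upwards [hLB] with x hx
  rw [hx]

end L1

theorem integrable_mulVec_apply {α m n : Type*} [MeasurableSpace α] [Fintype n] {μ : Measure α}
    (K : Matrix m n ℝ) {u : α → n → ℝ} (hu : Integrable u μ) (t : m) :
    Integrable (fun x => (K *ᵥ u x) t) μ :=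
  integrable_finsetSum _ fun i _ => (hu.eval i).const_mul (K t i)

theorem ae_measure_preimage_singleton_pos {Ω 𝓣 : Type*} [MeasurableSpace Ω] [MeasurableSpace 𝓣]
    [Countable 𝓣] [MeasurableSingletonClass 𝓣] {Q : Measure Ω} {T : Ω → 𝓣}
    (hT : Measurable T) : ∀ᵐ ω ∂Q, 0 < Q {ω' | T ω' = T ω} := by
  refine ae_of_ae_map (p := fun t => 0 < Q {ω' | T ω' = t}) hT.aemeasurable
    (ae_iff_of_countable.mpr fun t ht => ?_)
  rw [Measure.map_apply hT (measurableSet_singleton t)] at ht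
  exact pos_iff_ne_zero.mpr ht

section CondExp

variable {Ω 𝒳 𝓣 : Type*} [MeasurableSpace Ω] [MeasurableSpace 𝒳] {Q : Measure Ω} {X : Ω → 𝒳}
  {T : Ω → 𝓣}

theorem mul_integral_abs_map_le_of_condExp_ge [IsFiniteMeasure Q] (hX : Measurable X) {Y : Ω → ℝ}
    (hY : AEStronglyMeasurable Y Q) {c : ℝ} (hYc : ∀ ω, |Y ω| ≤ c) {ε : ℝ}
    (hε : ∀ᵐ ω ∂Q, ε ≤ Q[Y | MeasurableSpace.comap X inferInstance] ω)
    {φ : 𝒳 → ℝ} (hφ : Integrable φ (Q.map X)) :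
    ε * ∫ x, |φ x| ∂(Q.map X) ≤ ∫ ω, Y ω * |φ (X ω)| ∂Q := by
  -- a strongly measurable version of `φ`, so that `|φ ∘ X|` is `σ(X)`-measurable
  set ψ := hφ.1.mk φ
  have hψX : (fun ω => |φ (X ω)|) =ᵐ[Q] fun ω => |ψ (X ω)| := by
    filter_upwards [ae_of_ae_map hX.aemeasurable hφ.1.ae_eq_mk] with ω hω
    rw [hω]
  have hZm : StronglyMeasurable[MeasurableSpace.comap X inferInstance] fun ω => |ψ (X ω)| :=
    (hφ.1.stronglyMeasurable_mk.comp_measurable (comap_measurable X)).norm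
  have hZi : Integrable (fun ω => |ψ (X ω)|) Q :=
    ((hφ.congr hφ.1.ae_eq_mk).comp_measurable hX).abs
  have hYi : Integrable Y Q := (integrable_const c).mono' hY (.of_forall hYc)
  have hZYi : Integrable (fun ω => |ψ (X ω)| * Y ω) Q := by
    simpa only [mul_comm] using hZi.bdd_mul hY (c := c) (.of_forall hYc)
  have hpull : Q[(fun ω => |ψ (X ω)|) * Y | MeasurableSpace.comap X inferInstance]
      =ᵐ[Q] (fun ω => |ψ (X ω)|) * Q[Y | MeasurableSpace.comap X inferInstance] :=
    condExp_mul_of_stronglyMeasurable_left hZm hZYi hYi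
  calc ε * ∫ x, |φ x| ∂(Q.map X) = ∫ ω, ε * |ψ (X ω)| ∂Q := by
        rw [integral_map hX.aemeasurable hφ.abs.1, integral_const_mul, integral_congr_ae hψX]
    _ ≤ ∫ ω, |ψ (X ω)| * Q[Y | MeasurableSpace.comap X inferInstance] ω ∂Q := by
        refine integral_mono_ae (hZi.const_mul ε) (integrable_condExp.congr hpull) ?_
        filter_upwards [hε] with ω hω
        rw [mul_comm]
        exact mul_le_mul_of_nonneg_left hω (abs_nonneg _)
    _ = ∫ ω, |ψ (X ω)| * Y ω ∂Q :=
        (integral_congr_ae hpull.symm).trans (integral_condExp hX.comap_le)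
    _ = ∫ ω, Y ω * |φ (X ω)| ∂Q := by
        refine integral_congr_ae ?_
        filter_upwards [hψX] with ω hω
        rw [hω, mul_comm]

theorem mul_integral_abs_map_le_of_condExp_indicator_ge [IsFiniteMeasure Q]
    [MeasurableSpace 𝓣] [MeasurableSingletonClass 𝓣] (hT : Measurable T) (hX : Measurable X)
    {t : 𝓣} {ε : ℝ}
    (hε : ∀ᵐ ω ∂Q, ε ≤ Q[fun ω' => if T ω' = t then (1:ℝ) else 0 |
      MeasurableSpace.comap X inferInstance] ω)
    {ψ : 𝒳 → 𝓣 → ℝ} (hψt : Integrable (fun x => ψ x t) (Q.map X))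
    (hψ : Integrable (fun ω => ψ (X ω) (T ω)) Q) :
    ε * ∫ x, |ψ x t| ∂(Q.map X) ≤ ∫ ω, |ψ (X ω) (T ω)| ∂Q := by
  have hind : Measurable fun ω => if T ω = t then (1:ℝ) else 0 :=
    Measurable.ite (hT (measurableSet_singleton t)) measurable_const measurable_const
  refine (mul_integral_abs_map_le_of_condExp_ge hX hind.aestronglyMeasurable (c := 1)
    (fun ω => by split_ifs <;> simp) hε hψt).trans (integral_mono_of_nonneg ?_ hψ.abs ?_)
  · exact .of_forall fun ω => by positivity
  · refine .of_forall fun ω => ?_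
    by_cases h : T ω = t <;> simp [h]

theorem integrable_apply_comp [MeasurableSpace 𝓣] [MeasurableSingletonClass 𝓣] [Finite 𝓣]
    (hT : Measurable T) (hX : Measurable X)
    {ψ : 𝒳 → 𝓣 → ℝ} (hψ : ∀ t, Integrable (fun x => ψ x t) (Q.map X)) :
    Integrable (fun ω => ψ (X ω) (T ω)) Q := by
  have := Fintype.ofFinite 𝓣
  have hsum : (fun ω => ψ (X ω) (T ω))
      = fun ω => ∑ t, (if T ω = t then (1:ℝ) else 0) * ψ (X ω) t := by
    ext ω; simp
  rw [hsum]
  refine integrable_finsetSum _ fun t _ => ((hψ t).comp_measurable hX).bdd_mul (c := 1)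
    ((measurable_of_finite fun t' => if t' = t then (1:ℝ) else 0).comp hT).aestronglyMeasurable
    (.of_forall fun ω => ?_)
  split_ifs <;> simp

theorem mul_integral_norm_restrict_le [IsFiniteMeasure Q] [MeasurableSpace 𝓣]
    [MeasurableSingletonClass 𝓣] [Finite 𝓣] (hT : Measurable T) (hX : Measurable X)
    {s : Finset 𝓣} {ε : ℝ} (hε : 0 ≤ ε)
    (hcond : ∀ t ∈ s, ∀ᵐ ω ∂Q, ε ≤ Q[fun ω' => if T ω' = t then (1:ℝ) else 0 |
      MeasurableSpace.comap X inferInstance] ω)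
    {ψ : 𝒳 → 𝓣 → ℝ} (hψ : ∀ t, Integrable (fun x => ψ x t) (Q.map X)) :
    ε * ∫ x, ‖fun t : s => ψ x t‖ ∂(Q.map X) ≤ s.card * ∫ ω, |ψ (X ω) (T ω)| ∂Q := by
  have hnorm : ∀ x, ‖fun t : s => ψ x t‖ ≤ ∑ t ∈ s, |ψ x t| := fun x => by
    refine (pi_norm_le_iff_of_nonneg (by positivity)).mpr fun t => ?_
    exact Finset.single_le_sum (f := fun t => |ψ x t|) (fun _ _ => abs_nonneg _) t.2
  calc ε * ∫ x, ‖fun t : s => ψ x t‖ ∂(Q.map X)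
      ≤ ε * ∑ t ∈ s, ∫ x, |ψ x t| ∂(Q.map X) := by
        rw [← integral_finsetSum _ fun t _ => (hψ t).abs]
        exact mul_le_mul_of_nonneg_left (integral_mono
          (integrable_pi_iff.mpr fun t : s => hψ t).norm
          (integrable_finsetSum _ fun t _ => (hψ t).abs) hnorm) hε
    _ ≤ ∑ t ∈ s, ∫ ω, |ψ (X ω) (T ω)| ∂Q := by
        rw [Finset.mul_sum]
        exact Finset.sum_le_sum fun t ht => mul_integral_abs_map_le_of_condExp_indicator_ge hT hX
          (hcond t ht) (hψ t) (integrable_apply_comp hT hX hψ)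
    _ = s.card * ∫ ω, |ψ (X ω) (T ω)| ∂Q := by simp

theorem integral_abs_le_integral_norm_restrict (hX : Measurable X) {s : Finset 𝓣}
    (hs : ∀ᵐ ω ∂Q, T ω ∈ s) {ψ : 𝒳 → 𝓣 → ℝ}
    (hψ : Integrable (fun x (t : s) => ψ x t) (Q.map X)) :
    ∫ ω, |ψ (X ω) (T ω)| ∂Q ≤ ∫ x, ‖fun t : s => ψ x t‖ ∂(Q.map X) := by
  rw [integral_map hX.aemeasurable hψ.norm.1]
  refine integral_mono_of_nonneg (.of_forall fun _ => abs_nonneg _)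
    (hψ.comp_measurable hX).norm ?_
  filter_upwards [hs] with ω hω
  exact norm_le_pi_norm (fun t : s => ψ (X ω) t) ⟨T ω, hω⟩

theorem integral_norm_restrict_sub_le [IsFiniteMeasure Q] [MeasurableSpace 𝓣]
    [MeasurableSingletonClass 𝓣] [Finite 𝓣] (hT : Measurable T) (hX : Measurable X)
    {s : Finset 𝓣} {ε : ℝ} (hε : 0 < ε)
    (hcond : ∀ t ∈ s, ∀ᵐ ω ∂Q, ε ≤ Q[fun ω' => if T ω' = t then (1:ℝ) else 0 |
      MeasurableSpace.comap X inferInstance] ω)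
    {g : Ω → ℝ} (hg : Integrable g Q) {ψ ψ' : 𝒳 → 𝓣 → ℝ}
    (hψ : ∀ t, Integrable (fun x => ψ x t) (Q.map X))
    (hψ' : ∀ t, Integrable (fun x => ψ' x t) (Q.map X)) :
    ∫ x, ‖fun t : s => ψ x t - ψ' x t‖ ∂(Q.map X) ≤ s.card / ε *
      (∫ ω, |g ω - ψ (X ω) (T ω)| ∂Q + ∫ ω, |g ω - ψ' (X ω) (T ω)| ∂Q) := by
  have hdiff := mul_integral_norm_restrict_le hT hX hε.le hcond (ψ := ψ - ψ')
    fun t => (hψ t).sub (hψ' t)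
  have htri := integral_norm_sub_le_add (integrable_apply_comp hT hX hψ) hg
    (integrable_apply_comp hT hX hψ')
  simp only [Real.norm_eq_abs, abs_sub_comm (ψ _ _) (g _)] at htri
  rw [div_mul_eq_mul_div, le_div_iff₀ hε, mul_comm]
  exact hdiff.trans (mul_le_mul_of_nonneg_left htri (Nat.cast_nonneg _))

theorem integral_abs_sub_le_add_integral_norm_restrict [MeasurableSpace 𝓣]
    [MeasurableSingletonClass 𝓣] [Finite 𝓣] (hT : Measurable T) (hX : Measurable X)
    {s : Finset 𝓣} (hs : ∀ᵐ ω ∂Q, T ω ∈ s) {g : Ω → ℝ} (hg : Integrable g Q)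
    {ψ ψ' : 𝒳 → 𝓣 → ℝ} (hψ : ∀ t, Integrable (fun x => ψ x t) (Q.map X))
    (hψ' : ∀ t, Integrable (fun x => ψ' x t) (Q.map X)) :
    ∫ ω, |g ω - ψ' (X ω) (T ω)| ∂Q ≤
      ∫ ω, |g ω - ψ (X ω) (T ω)| ∂Q + ∫ x, ‖fun t : s => ψ x t - ψ' x t‖ ∂(Q.map X) :=
  (integral_norm_sub_le_add hg (integrable_apply_comp hT hX hψ)
    (integrable_apply_comp hT hX hψ')).trans (add_le_add le_rfl
      (integral_abs_le_integral_norm_restrict hX hs (ψ := ψ - ψ')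
        (integrable_pi_iff.mpr fun t => (hψ t).sub (hψ' t))))

end CondExp

theorem stmt10_general {Ω 𝒳 𝓣 : Type*} [MeasurableSpace Ω] [MeasurableSpace 𝒳]
    [Fintype 𝓣] [MeasurableSpace 𝓣] [MeasurableSingletonClass 𝓣] {r : ℕ}
    (Q : Measure Ω) [IsProbabilityMeasure Q]
    (Tstar : Ω → 𝓣) (X : Ω → 𝒳) (hT : Measurable Tstar) (hX : Measurable X)
    (C : Fin r → Set 𝓣)
    (ε : ℝ) (hε : 0 < ε)
    (hcond : ∀ t : 𝓣, 0 < Q {ω | Tstar ω = t} →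
      ∀ᵐ ω ∂Q, ε ≤ (Q[fun ω' => (if Tstar ω' = t then (1:ℝ) else 0) |
        MeasurableSpace.comap X inferInstance]) ω)
    (g : Ω → ℝ) (hg : Integrable g Q)
    (F : ℕ → Fin r → 𝒳 → ℝ)
    (hFi : ∀ n i, Integrable (F n i) (Measure.map X Q))
    (hconv : Tendsto
      (fun n => ∫ ω, |g ω - ∑ i, (if Tstar ω ∈ C i then (1:ℝ) else 0) * F n i (X ω)| ∂Q)
      atTop (nhds 0)) :
    ∃ f : Fin r → 𝒳 → ℝ, (∀ i, Measurable (f i)) ∧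
      (∀ i, Integrable (f i) (Measure.map X Q)) ∧
      g =ᵐ[Q] fun ω => ∑ i, (if Tstar ω ∈ C i then (1:ℝ) else 0) * f i (X ω) := by
  set S : Finset 𝓣 := Finset.univ.filter fun t => 0 < Q {ω | Tstar ω = t}
  set M : Matrix 𝓣 (Fin r) ℝ := Matrix.of fun t i => if t ∈ C i then 1 else 0
  set L : (Fin r → ℝ) →L[ℝ] (S → ℝ) :=
    LinearMap.toContinuousLinearMap (LinearMap.funLeft ℝ ℝ Subtype.val ∘ₗ M.mulVecLin)
  have hu : ∀ n, Integrable (fun x i => F n i x) (Q.map X) := fun n =>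
    integrable_pi_iff.mpr (hFi n)
  have hS : ∀ᵐ ω ∂Q, Tstar ω ∈ S := by
    filter_upwards [ae_measure_preimage_singleton_pos hT] with ω hω
    simpa [S] using hω
  have hL : ∀ c, L c = fun t : S => (M *ᵥ c) t := fun c => rfl
  obtain ⟨f, hfm, hfi, hf⟩ := exists_tendsto_integral_norm_comp_sub_comp L hu hconv fun n m => by
    simp only [hL, Pi.sub_def]
    exact integral_norm_restrict_sub_le hT hX hε (fun t ht => hcond t (Finset.mem_filter.mp ht).2)
      hg (integrable_mulVec_apply M (hu n)) (integrable_mulVec_apply M (hu m))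
  refine ⟨fun i x => f x i, fun i => (measurable_pi_apply i).comp hfm.measurable,
    fun i => hfi.eval i, ?_⟩
  have hlim := hconv.add hf
  rw [add_zero] at hlim
  rw [← sub_ae_eq_zero]
  refine ae_eq_zero_of_integral_norm_le_of_tendsto
    (hg.sub (integrable_apply_comp hT hX (integrable_mulVec_apply M hfi))) hlim fun n => ?_
  simp only [hL, Pi.sub_def, Real.norm_eq_abs]
  exact integral_abs_sub_le_add_integral_norm_restrict hT hX hS hg
    (integrable_mulVec_apply M (hu n)) (integrable_mulVec_apply M hfi)

/-- Closedness of the range of the operator `A(f)(t*,x) = Σᵢ 1{t* ∈ Cᵢ} fᵢ(x)` in `L¹`: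
any `g` that is an `L¹`-limit of elements of the range is a.s. equal to `A(f)` for some
tuple `f` of integrable covariate functions. -/
theorem stmt10 {Ω 𝒳 𝓣 : Type*} [MeasurableSpace Ω] [MeasurableSpace 𝒳]
    [Fintype 𝓣] [MeasurableSpace 𝓣] [MeasurableSingletonClass 𝓣] {r : ℕ}
    (Q : Measure Ω) [IsProbabilityMeasure Q]
    (Tstar : Ω → 𝓣) (X : Ω → 𝒳) (hT : Measurable Tstar) (hX : Measurable X)
    (C : Fin r → Set 𝓣)
    (ε : ℝ) (hε : 0 < ε)
    (hcond : ∀ t : 𝓣, 0 < Q {ω | Tstar ω = t} →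
      ∀ᵐ ω ∂Q, ε ≤ (Q[fun ω' => (if Tstar ω' = t then (1:ℝ) else 0) |
        MeasurableSpace.comap X inferInstance]) ω)
    (g : Ω → ℝ) (hg : Integrable g Q)
    (F : ℕ → Fin r → 𝒳 → ℝ)
    (hFm : ∀ n i, Measurable (F n i))
    (hFi : ∀ n i, Integrable (F n i) (Measure.map X Q))
    (hconv : Tendsto
      (fun n => ∫ ω, |g ω - ∑ i, (if Tstar ω ∈ C i then (1:ℝ) else 0) * F n i (X ω)| ∂Q)
      atTop (nhds 0)) :
    ∃ f : Fin r → 𝒳 → ℝ, (∀ i, Measurable (f i)) ∧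
      (∀ i, Integrable (f i) (Measure.map X Q)) ∧
      g =ᵐ[Q] fun ω => ∑ i, (if Tstar ω ∈ C i then (1:ℝ) else 0) * f i (X ω) :=
  stmt10_general Q Tstar X hT hX C ε hε hcond g hg F hFi hconv
end

section
/- Let (Y*(0), Y*(1), T, X) be random elements with T ∈ {0,1}, Y*(0), Y*(1) integrable real random variables, and suppose (Y*(0), Y*(1)) is conditionally independent of T given X. Let e(X) = P(T = 1 | X) satisfy δ ≤ e(X) ≤ 1 − δ almost surely for some δ > 0, and let Y = Y*(T). Then E[Y·T/e(X) − Y·(1−T)/(1−e(X))] = E[Y*(1) − Y*(0)]. -/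
open MeasureTheory Filter

noncomputable def trunc' (n : ℕ) (x : ℝ) : ℝ := max (-(n:ℝ)) (min (n:ℝ) x)

lemma trunc'_meas (n : ℕ) : Measurable (trunc' n) :=
  measurable_const.max (measurable_const.min measurable_id)

lemma trunc'_abs_le_n (n : ℕ) (x : ℝ) : |trunc' n x| ≤ n := by
  have hn : (0:ℝ) ≤ n := Nat.cast_nonneg n
  rw [abs_le, trunc']
  refine ⟨le_max_left _ _, max_le (by linarith) (min_le_left _ _)⟩

lemma trunc'_abs_le (n : ℕ) (x : ℝ) : |trunc' n x| ≤ |x| := by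
  have hn : (0:ℝ) ≤ n := Nat.cast_nonneg n
  rw [abs_le, trunc']
  rcases le_total 0 x with hx | hx
  · rw [abs_of_nonneg hx]
    refine ⟨le_max_of_le_right (le_min (by linarith) (by linarith)), max_le (by linarith) (min_le_right _ _)⟩
  · rw [abs_of_nonpos hx, min_eq_right (by linarith)]
    refine ⟨le_max_of_le_right (by linarith), max_le (by linarith) (by linarith)⟩

lemma trunc'_eq_of_le {n : ℕ} {x : ℝ} (h : |x| ≤ n) : trunc' n x = x := by
  rw [abs_le] at h
  rw [trunc', min_eq_right h.2, max_eq_right h.1]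

lemma trunc'_tendsto (x : ℝ) : Tendsto (fun n : ℕ => trunc' n x) atTop (nhds x) := by
  refine tendsto_const_nhds.congr' ?_
  filter_upwards [eventually_ge_atTop ⌈|x|⌉₊] with n hn
  exact (trunc'_eq_of_le (le_trans (Nat.le_ceil _) (Nat.cast_le.mpr hn))).symm

/-- Key lemma: for integrable `Z`, indicator `I` of `T`, `e = E[I|m]`, conditional
independence for truncations, and bounded `m`-measurable `g`:
`∫ Z·I·g = ∫ Z·e·g`. -/
lemma key_lemma {Ω : Type*} [inst : MeasurableSpace Ω] (P : Measure Ω) [IsProbabilityMeasure P]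
    {m : MeasurableSpace Ω} (hm : m ≤ inst)
    (Z : Ω → ℝ) (hZm : Measurable[inst] Z) (hZi : Integrable Z P)
    (T : Ω → Bool) (hT : Measurable[inst] T)
    (e : Ω → ℝ) (he : StronglyMeasurable[m] e) (heb : ∀ᵐ ω ∂P, |e ω| ≤ 1)
    (hCI : ∀ n : ℕ, P[fun ω => trunc' n (Z ω) * (if T ω then (1:ℝ) else 0)|m]
      =ᵐ[P] fun ω => (P[fun ω' => trunc' n (Z ω')|m]) ω * e ω)
    (g : Ω → ℝ) (hg : StronglyMeasurable[m] g) (C : ℝ) (hgC : ∀ ω, |g ω| ≤ C) :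
    ∫ ω, Z ω * (if T ω then (1:ℝ) else 0) * g ω ∂P
      = ∫ ω, Z ω * e ω * g ω ∂P := by
  set I : Ω → ℝ := fun ω => if T ω then (1:ℝ) else 0 with hIdef
  have hIm : Measurable[inst] I := by
    apply Measurable.ite (hT (measurableSet_singleton true)) measurable_const measurable_const
  have hIb : ∀ ω, |I ω| ≤ 1 := by
    intro ω; by_cases h : T ω <;> simp [hIdef, h]
  have hgm : Measurable[inst] g := (hg.mono hm).measurable
  have hem : Measurable[inst] e := (he.mono hm).measurable
  haveI : SigmaFinite (P.trim hm) := by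
    have : IsFiniteMeasure (P.trim hm) := isFiniteMeasure_trim hm
    infer_instance
  have hei : Integrable e P :=
    (integrable_const (1:ℝ)).mono' hem.aestronglyMeasurable (heb.mono fun ω h => by simpa using h)
  have hne : Nonempty Ω := by
    by_contra h
    have h1 := measure_univ (μ := P)
    rw [Set.univ_eq_empty_iff.mpr (not_nonempty_iff.mp h)] at h1
    simp at h1
  have hC0 : 0 ≤ C := le_trans (abs_nonneg _) (hgC (Classical.arbitrary Ω))
  -- per-n equality of integrals
  have hmain : ∀ n : ℕ, ∫ ω, trunc' n (Z ω) * I ω * g ω ∂P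
      = ∫ ω, trunc' n (Z ω) * e ω * g ω ∂P := by
    intro n
    have htZm : Measurable[inst] fun ω => trunc' n (Z ω) := (trunc'_meas n).comp hZm
    have htZb : ∀ ω, |trunc' n (Z ω)| ≤ n := fun ω => trunc'_abs_le_n n (Z ω)
    have hInt0 : Integrable (fun ω => trunc' n (Z ω)) P :=
      (integrable_const ((n:ℝ))).mono' htZm.aestronglyMeasurable
        (ae_of_all _ fun ω => by simpa using htZb ω)
    have hInt1 : Integrable (fun ω => trunc' n (Z ω) * I ω) P :=
      (integrable_const ((n:ℝ))).mono' ((htZm.mul hIm).aestronglyMeasurable)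
        (ae_of_all _ fun ω => by
          rw [Real.norm_eq_abs, abs_mul]
          calc |trunc' n (Z ω)| * |I ω| ≤ (n:ℝ) * 1 :=
                mul_le_mul (htZb ω) (hIb ω) (abs_nonneg _) (Nat.cast_nonneg n)
            _ = (n:ℝ) := by ring)
    have hInt2 : Integrable (g * fun ω => trunc' n (Z ω) * I ω) P :=
      hInt1.bdd_mul hgm.aestronglyMeasurable (ae_of_all _ fun ω => by
        rw [Real.norm_eq_abs]; exact hgC ω)
    have hge : StronglyMeasurable[m] (g * e) := hg.mul he
    have hInt3 : Integrable ((g * e) * fun ω => trunc' n (Z ω)) P := by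
      have : Integrable (fun ω => (g ω * trunc' n (Z ω)) * e ω) P :=
        hei.bdd_mul ((hgm.mul htZm).aestronglyMeasurable) (ae_of_all _ fun ω => by
          rw [Real.norm_eq_abs, abs_mul]
          exact mul_le_mul (hgC ω) (htZb ω) (abs_nonneg _) hC0)
      exact this.congr (ae_of_all _ fun ω => by simp [Pi.mul_apply]; ring)
    have c1 : P[g * (fun ω => trunc' n (Z ω) * I ω)|m]
        =ᵐ[P] g * P[fun ω => trunc' n (Z ω) * I ω|m] :=
      condExp_mul_of_stronglyMeasurable_left hg hInt2 hInt1
    have c2 : P[(g * e) * (fun ω => trunc' n (Z ω))|m]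
        =ᵐ[P] (g * e) * P[fun ω => trunc' n (Z ω)|m] :=
      condExp_mul_of_stronglyMeasurable_left hge hInt3 hInt0
    calc ∫ ω, trunc' n (Z ω) * I ω * g ω ∂P
        = ∫ ω, (g * fun ω => trunc' n (Z ω) * I ω) ω ∂P := by
          refine integral_congr_ae (ae_of_all _ fun ω => ?_)
          simp only [Pi.mul_apply]; ring
      _ = ∫ ω, (P[g * (fun ω => trunc' n (Z ω) * I ω)|m]) ω ∂P :=
          (integral_condExp hm).symm
      _ = ∫ ω, (g * P[fun ω => trunc' n (Z ω) * I ω|m]) ω ∂P := integral_congr_ae c1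
      _ = ∫ ω, ((g * e) * P[fun ω => trunc' n (Z ω)|m]) ω ∂P := by
          refine integral_congr_ae ?_
          filter_upwards [hCI n] with ω hω
          simp only [Pi.mul_apply]
          rw [hω]; ring
      _ = ∫ ω, (P[(g * e) * (fun ω => trunc' n (Z ω))|m]) ω ∂P :=
          (integral_congr_ae c2).symm
      _ = ∫ ω, ((g * e) * fun ω => trunc' n (Z ω)) ω ∂P := integral_condExp hm
      _ = ∫ ω, trunc' n (Z ω) * e ω * g ω ∂P := by
          refine integral_congr_ae (ae_of_all _ fun ω => ?_)
          simp only [Pi.mul_apply]; ring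
  -- dominated convergence on both sides
  have hbound : Integrable (fun ω => |Z ω| * C) P := hZi.abs.mul_const C
  have t1 : Tendsto (fun n : ℕ => ∫ ω, trunc' n (Z ω) * I ω * g ω ∂P) atTop
      (nhds (∫ ω, Z ω * I ω * g ω ∂P)) := by
    refine tendsto_integral_of_dominated_convergence (fun ω => |Z ω| * C)
      (fun n => ((((trunc'_meas n).comp hZm).mul hIm).mul hgm).aestronglyMeasurable)
      hbound (fun n => ae_of_all _ fun ω => ?_) (ae_of_all _ fun ω => ?_)
    · rw [Real.norm_eq_abs, abs_mul, abs_mul]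
      have h1 : |trunc' n (Z ω)| * |I ω| ≤ |Z ω| :=
        le_trans (mul_le_mul_of_nonneg_left (hIb ω) (abs_nonneg _))
          (by simpa using trunc'_abs_le n (Z ω))
      exact mul_le_mul h1 (hgC ω) (abs_nonneg _) (abs_nonneg _)
    · exact ((trunc'_tendsto (Z ω)).mul_const (I ω)).mul_const (g ω)
  have t2 : Tendsto (fun n : ℕ => ∫ ω, trunc' n (Z ω) * e ω * g ω ∂P) atTop
      (nhds (∫ ω, Z ω * e ω * g ω ∂P)) := by
    refine tendsto_integral_of_dominated_convergence (fun ω => |Z ω| * C)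
      (fun n => ((((trunc'_meas n).comp hZm).mul hem).mul hgm).aestronglyMeasurable)
      hbound (fun n => ?_) (ae_of_all _ fun ω => ?_)
    · filter_upwards [heb] with ω hω
      rw [Real.norm_eq_abs, abs_mul, abs_mul]
      have h1 : |trunc' n (Z ω)| * |e ω| ≤ |Z ω| :=
        le_trans (mul_le_mul_of_nonneg_left hω (abs_nonneg _))
          (by simpa using trunc'_abs_le n (Z ω))
      exact mul_le_mul h1 (hgC ω) (abs_nonneg _) (abs_nonneg _)
    · exact ((trunc'_tendsto (Z ω)).mul_const (e ω)).mul_const (g ω)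
  exact tendsto_nhds_unique (t1.congr hmain) t2

/-- Inverse-propensity-weighting identification of the average treatment effect under
unconfoundedness and overlap: `E[YT/e(X) − Y(1−T)/(1−e(X))] = E[Y*(1) − Y*(0)]`. -/
theorem stmt11 {Ω 𝒳 : Type*} [MeasurableSpace Ω] [MeasurableSpace 𝒳]
    (P : Measure Ω) [IsProbabilityMeasure P]
    (Y0 Y1 : Ω → ℝ) (T : Ω → Bool) (X : Ω → 𝒳)
    (hY0 : Measurable Y0) (hY1 : Measurable Y1) (hT : Measurable T) (hX : Measurable X)
    (hY0i : Integrable Y0 P) (hY1i : Integrable Y1 P)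
    (e : Ω → ℝ)
    (he : e = P[fun ω => (if T ω then (1:ℝ) else 0) | MeasurableSpace.comap X inferInstance])
    (hCI : ∀ f : ℝ × ℝ → ℝ, Measurable f → (∃ C, ∀ p, |f p| ≤ C) →
      P[fun ω => f (Y0 ω, Y1 ω) * (if T ω then (1:ℝ) else 0) |
          MeasurableSpace.comap X inferInstance]
        =ᵐ[P] fun ω =>
          (P[fun ω' => f (Y0 ω', Y1 ω') | MeasurableSpace.comap X inferInstance]) ω * e ω)
    (δ : ℝ) (hδ : 0 < δ) (hbd : ∀ᵐ ω ∂P, δ ≤ e ω ∧ e ω ≤ 1 - δ) :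
    ∫ ω, ((if T ω then Y1 ω else Y0 ω) * (if T ω then (1:ℝ) else 0) / e ω
        - (if T ω then Y1 ω else Y0 ω) * (if T ω then (0:ℝ) else 1) / (1 - e ω)) ∂P
      = ∫ ω, (Y1 ω - Y0 ω) ∂P := by
  classical
  have hm : MeasurableSpace.comap X inferInstance ≤ ‹MeasurableSpace Ω› := hX.comap_le
  have hesm : StronglyMeasurable[MeasurableSpace.comap X inferInstance] e := by
    rw [he]; exact stronglyMeasurable_condExp
  have hem : Measurable e := (hesm.mono hm).measurable
  have heb : ∀ᵐ ω ∂P, |e ω| ≤ 1 := hbd.mono fun ω h => by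
    rw [abs_le]; constructor <;> linarith [h.1, h.2]
  set I : Ω → ℝ := fun ω => if T ω then (1:ℝ) else 0 with hIdef
  set I0 : Ω → ℝ := fun ω => if T ω then (0:ℝ) else 1 with hI0def
  have hIm : Measurable I :=
    Measurable.ite (hT (measurableSet_singleton true)) measurable_const measurable_const
  have hI0m : Measurable I0 :=
    Measurable.ite (hT (measurableSet_singleton true)) measurable_const measurable_const
  have hIb : ∀ ω, |I ω| ≤ 1 := fun ω => by by_cases h : T ω <;> simp [hIdef, h]
  have hI0b : ∀ ω, |I0 ω| ≤ 1 := fun ω => by by_cases h : T ω <;> simp [hI0def, h]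
  set g1 : Ω → ℝ := fun ω => (max (e ω) δ)⁻¹ with hg1def
  set g0 : Ω → ℝ := fun ω => (max (1 - e ω) δ)⁻¹ with hg0def
  have hg1sm : StronglyMeasurable[MeasurableSpace.comap X inferInstance] g1 :=
    ((hesm.measurable.max measurable_const).inv).stronglyMeasurable
  have hg0sm : StronglyMeasurable[MeasurableSpace.comap X inferInstance] g0 :=
    (((measurable_const.sub hesm.measurable).max measurable_const).inv).stronglyMeasurable
  have hg1m : Measurable g1 := (hg1sm.mono hm).measurable
  have hg0m : Measurable g0 := (hg0sm.mono hm).measurable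
  have hg1C : ∀ ω, |g1 ω| ≤ δ⁻¹ := fun ω => by
    have h1 : δ ≤ max (e ω) δ := le_max_right _ _
    have h2 : (0:ℝ) < max (e ω) δ := lt_of_lt_of_le hδ h1
    rw [hg1def, abs_of_pos (inv_pos.mpr h2)]
    exact inv_anti₀ hδ h1
  have hg0C : ∀ ω, |g0 ω| ≤ δ⁻¹ := fun ω => by
    have h1 : δ ≤ max (1 - e ω) δ := le_max_right _ _
    have h2 : (0:ℝ) < max (1 - e ω) δ := lt_of_lt_of_le hδ h1
    rw [hg0def, abs_of_pos (inv_pos.mpr h2)]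
    exact inv_anti₀ hδ h1
  have hCI1 : ∀ n : ℕ,
      P[fun ω => trunc' n (Y1 ω) * (if T ω then (1:ℝ) else 0) | MeasurableSpace.comap X inferInstance]
      =ᵐ[P] fun ω => (P[fun ω' => trunc' n (Y1 ω') | MeasurableSpace.comap X inferInstance]) ω
        * e ω :=
    fun n => hCI (fun p => trunc' n p.2) ((trunc'_meas n).comp measurable_snd)
      ⟨n, fun p => trunc'_abs_le_n n p.2⟩
  have hCI0 : ∀ n : ℕ,
      P[fun ω => trunc' n (Y0 ω) * (if T ω then (1:ℝ) else 0) | MeasurableSpace.comap X inferInstance]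
      =ᵐ[P] fun ω => (P[fun ω' => trunc' n (Y0 ω') | MeasurableSpace.comap X inferInstance]) ω
        * e ω :=
    fun n => hCI (fun p => trunc' n p.1) ((trunc'_meas n).comp measurable_fst)
      ⟨n, fun p => trunc'_abs_le_n n p.1⟩
  have hA := key_lemma P hm Y1 hY1 hY1i T hT e hesm heb hCI1 g1 hg1sm δ⁻¹ hg1C
  have hB := key_lemma P hm Y0 hY0 hY0i T hT e hesm heb hCI0 g0 hg0sm δ⁻¹ hg0C
  have hδinv : (0:ℝ) ≤ δ⁻¹ := by positivity
  -- integrability facts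
  have i1 : Integrable (fun ω => Y1 ω * I ω * g1 ω) P :=
    (hY1i.abs.mul_const δ⁻¹).mono' ((hY1.mul hIm).mul hg1m).aestronglyMeasurable
      (ae_of_all _ fun ω => by
        rw [Real.norm_eq_abs, abs_mul, abs_mul]
        calc |Y1 ω| * |I ω| * |g1 ω| ≤ (|Y1 ω| * 1) * δ⁻¹ :=
            mul_le_mul (mul_le_mul_of_nonneg_left (hIb ω) (abs_nonneg _)) (hg1C ω)
              (abs_nonneg _) (by positivity)
          _ = |Y1 ω| * δ⁻¹ := by ring)
  have i0 : Integrable (fun ω => Y0 ω * I0 ω * g0 ω) P :=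
    (hY0i.abs.mul_const δ⁻¹).mono' ((hY0.mul hI0m).mul hg0m).aestronglyMeasurable
      (ae_of_all _ fun ω => by
        rw [Real.norm_eq_abs, abs_mul, abs_mul]
        calc |Y0 ω| * |I0 ω| * |g0 ω| ≤ (|Y0 ω| * 1) * δ⁻¹ :=
            mul_le_mul (mul_le_mul_of_nonneg_left (hI0b ω) (abs_nonneg _)) (hg0C ω)
              (abs_nonneg _) (by positivity)
          _ = |Y0 ω| * δ⁻¹ := by ring)
  have i0' : Integrable (fun ω => Y0 ω * I ω * g0 ω) P :=
    (hY0i.abs.mul_const δ⁻¹).mono' ((hY0.mul hIm).mul hg0m).aestronglyMeasurable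
      (ae_of_all _ fun ω => by
        rw [Real.norm_eq_abs, abs_mul, abs_mul]
        calc |Y0 ω| * |I ω| * |g0 ω| ≤ (|Y0 ω| * 1) * δ⁻¹ :=
            mul_le_mul (mul_le_mul_of_nonneg_left (hIb ω) (abs_nonneg _)) (hg0C ω)
              (abs_nonneg _) (by positivity)
          _ = |Y0 ω| * δ⁻¹ := by ring)
  have i0g : Integrable (fun ω => Y0 ω * g0 ω) P :=
    (hY0i.abs.mul_const δ⁻¹).mono' (hY0.mul hg0m).aestronglyMeasurable
      (ae_of_all _ fun ω => by
        rw [Real.norm_eq_abs, abs_mul]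
        exact mul_le_mul_of_nonneg_left (hg0C ω) (abs_nonneg _))
  have i0e : Integrable (fun ω => Y0 ω * e ω * g0 ω) P :=
    (hY0i.abs.mul_const δ⁻¹).mono' ((hY0.mul hem).mul hg0m).aestronglyMeasurable
      (by
        filter_upwards [heb] with ω hω
        rw [Real.norm_eq_abs, abs_mul, abs_mul]
        calc |Y0 ω| * |e ω| * |g0 ω| ≤ (|Y0 ω| * 1) * δ⁻¹ :=
            mul_le_mul (mul_le_mul_of_nonneg_left hω (abs_nonneg _)) (hg0C ω)
              (abs_nonneg _) (by positivity)
          _ = |Y0 ω| * δ⁻¹ := by ring)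
  -- value of the weighted integrals
  have hA1 : ∫ ω, Y1 ω * I ω * g1 ω ∂P = ∫ ω, Y1 ω ∂P := by
    rw [hA]
    refine integral_congr_ae ?_
    filter_upwards [hbd] with ω hω
    have hmax : max (e ω) δ = e ω := max_eq_left hω.1
    have hne : e ω ≠ 0 := by linarith [hω.1]
    rw [hg1def]
    simp only [hmax]
    field_simp
  have hB1 : ∫ ω, Y0 ω * I0 ω * g0 ω ∂P = ∫ ω, Y0 ω ∂P := by
    have hsub : ∫ ω, Y0 ω * I0 ω * g0 ω ∂P
        = ∫ ω, Y0 ω * g0 ω ∂P - ∫ ω, Y0 ω * I ω * g0 ω ∂P := by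
      rw [← integral_sub i0g i0']
      refine integral_congr_ae (ae_of_all _ fun ω => ?_)
      by_cases h : T ω <;> simp [hIdef, hI0def, h] <;> ring
    rw [hsub, hB, ← integral_sub i0g i0e]
    refine integral_congr_ae ?_
    filter_upwards [hbd] with ω hω
    have hmax : max (1 - e ω) δ = 1 - e ω := max_eq_left (by linarith [hω.2])
    have hne : 1 - e ω ≠ 0 := by
      have : δ ≤ 1 - e ω := by linarith [hω.2]
      linarith
    rw [hg0def]
    simp only [hmax]
    field_simp
  -- put it together
  have hLHS : ∫ ω, ((if T ω then Y1 ω else Y0 ω) * (if T ω then (1:ℝ) else 0) / e ω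
        - (if T ω then Y1 ω else Y0 ω) * (if T ω then (0:ℝ) else 1) / (1 - e ω)) ∂P
      = ∫ ω, (Y1 ω * I ω * g1 ω - Y0 ω * I0 ω * g0 ω) ∂P := by
    refine integral_congr_ae ?_
    filter_upwards [hbd] with ω hω
    have hmax1 : max (e ω) δ = e ω := max_eq_left hω.1
    have hmax0 : max (1 - e ω) δ = 1 - e ω := max_eq_left (by linarith [hω.2])
    by_cases h : T ω
    · simp [hIdef, hI0def, hg1def, hg0def, h, hmax1, div_eq_mul_inv]
    · simp [hIdef, hI0def, hg1def, hg0def, h, hmax0, div_eq_mul_inv]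
  rw [hLHS, integral_sub i1 i0, hA1, hB1, integral_sub hY1i hY0i]
end

section
/- Let Z ∈ {0,1} be a random variable with p = P(Z = 1) ∈ (0,1), and let T*(0), T*(1) ∈ {0,1} be random variables independent of Z with P(T*(1) ≥ T*(0)) = 1. Define the observed treatment T = T*(Z). Then P(T*(1) > T*(0)) = E[T·Z]/p − E[T·(1−Z)]/(1−p). -/
/-!
Since `T = T*(1)` on `{Z = 1}` and `T = T*(0)` on `{Z = 0}`, independence gives
`E[T Z] = P(T*(1) = 1) p` and `E[T (1 - Z)] = P(T*(0) = 1) (1 - p)`. By monotonicity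
`{T*(0) = 1}` is a.e. contained in `{T*(1) = 1}`, so the difference of their probabilities is the
probability of the compliers `{T*(0) = 0, T*(1) = 1}`.
-/

open MeasureTheory

section

variable {Ω : Type*} [MeasurableSpace Ω] {μ : Measure Ω}

lemma integral_ite_one_zero {f : Ω → Bool} (hf : Measurable f) :
    ∫ ω, (if f ω then (1 : ℝ) else 0) ∂μ = μ.real {ω | f ω = true} := by
  rw [← integral_indicator_one (s := {ω | f ω = true}) (hf (measurableSet_singleton true))]
  congr 1 with ω
  by_cases h : f ω <;> simp [h]

lemma integral_ite_zero_one [IsProbabilityMeasure μ] {f : Ω → Bool} (hf : Measurable f) :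
    ∫ ω, (if f ω then (0 : ℝ) else 1) ∂μ = 1 - μ.real {ω | f ω = true} := by
  have hs : MeasurableSet {ω | f ω = true} := hf (measurableSet_singleton true)
  rw [← probReal_compl_eq_one_sub hs, ← integral_indicator_one hs.compl]
  congr 1 with ω
  by_cases h : f ω <;> simp [h]

lemma measureReal_sdiff_of_ae_le [IsFiniteMeasure μ] {s t : Set Ω} (hs : MeasurableSet s)
    (hst : s ≤ᵐ[μ] t) : μ.real (t \ s) = μ.real t - μ.real s := by
  rw [measureReal_sdiff' hs, Set.union_comm,
    measureReal_congr (union_ae_eq_right.2 (ae_le_set.1 hst))]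

namespace ProbabilityTheory.IndepFun

variable {Z T0 T1 : Ω → Bool}

lemma integral_observed_mul_instrument (h : T1 ⟂ᵢ[μ] Z) (hZ : Measurable Z)
    (hT1 : Measurable T1) :
    ∫ ω, (if (if Z ω then T1 ω else T0 ω) then (1 : ℝ) else 0) * (if Z ω then 1 else 0) ∂μ
      = μ.real {ω | T1 ω = true} * μ.real {ω | Z ω = true} := by
  have h_observed : ∀ ω,
      (if (if Z ω then T1 ω else T0 ω) then (1 : ℝ) else 0) * (if Z ω then 1 else 0)
        = (if T1 ω then 1 else 0) * (if Z ω then 1 else 0) := by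
    intro ω
    cases Z ω <;> simp
  simp_rw [h_observed]
  rw [h.integral_fun_comp_mul_comp (f := fun b => if b then (1 : ℝ) else 0)
      (g := fun b => if b then (1 : ℝ) else 0) hT1.aemeasurable hZ.aemeasurable
      (by fun_prop) (by fun_prop),
    integral_ite_one_zero hT1, integral_ite_one_zero hZ]

lemma integral_observed_mul_not_instrument [IsProbabilityMeasure μ] (h : T0 ⟂ᵢ[μ] Z)
    (hZ : Measurable Z) (hT0 : Measurable T0) :
    ∫ ω, (if (if Z ω then T1 ω else T0 ω) then (1 : ℝ) else 0) * (if Z ω then 0 else 1) ∂μ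
      = μ.real {ω | T0 ω = true} * (1 - μ.real {ω | Z ω = true}) := by
  have h_observed : ∀ ω,
      (if (if Z ω then T1 ω else T0 ω) then (1 : ℝ) else 0) * (if Z ω then 0 else 1)
        = (if T0 ω then 1 else 0) * (if Z ω then 0 else 1) := by
    intro ω
    cases Z ω <;> simp
  simp_rw [h_observed]
  rw [h.integral_fun_comp_mul_comp (f := fun b => if b then (1 : ℝ) else 0)
      (g := fun b => if b then (0 : ℝ) else 1) hT0.aemeasurable hZ.aemeasurable
      (by fun_prop) (by fun_prop),
    integral_ite_one_zero hT0, integral_ite_zero_one hZ]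

end ProbabilityTheory.IndepFun

end

/-- Identification of the complier probability in the Imbens–Angrist model: with a binary
instrument `Z` independent of the potential treatments `(T*(0), T*(1))`, no defiers, and
`T = T*(Z)`, we have `P(T*(1) > T*(0)) = E[TZ]/p − E[T(1−Z)]/(1−p)`. -/
theorem stmt12 {Ω : Type*} [MeasurableSpace Ω] (P : Measure Ω) [IsProbabilityMeasure P]
    (Z T0 T1 : Ω → Bool) (hZ : Measurable Z) (hT0 : Measurable T0) (hT1 : Measurable T1)
    (hindep : ProbabilityTheory.IndepFun (fun ω => (T0 ω, T1 ω)) Z P)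
    (hmono : ∀ᵐ ω ∂P, T0 ω ≤ T1 ω)
    (p : ℝ) (hp : p = (P {ω | Z ω = true}).toReal) (hp0 : 0 < p) (hp1 : p < 1) :
    (P {ω | T0 ω = false ∧ T1 ω = true}).toReal
      = (∫ ω, (if (if Z ω then T1 ω else T0 ω) then (1:ℝ) else 0)
            * (if Z ω then (1:ℝ) else 0) ∂P) / p
        - (∫ ω, (if (if Z ω then T1 ω else T0 ω) then (1:ℝ) else 0)
            * (if Z ω then (0:ℝ) else 1) ∂P) / (1 - p) := by
  have h_compliers :
      {ω | T0 ω = false ∧ T1 ω = true} = {ω | T1 ω = true} \ {ω | T0 ω = true} := by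
    ext ω
    simp [and_comm]
  have h_no_defiers : {ω | T0 ω = true} ≤ᵐ[P] {ω | T1 ω = true} := by
    filter_upwards [hmono] with ω hω h0
    exact Bool.eq_true_of_true_le (h0 ▸ hω)
  have hT0_meas : MeasurableSet {ω | T0 ω = true} := hT0 (measurableSet_singleton true)
  have hT1_indep : ProbabilityTheory.IndepFun T1 Z P := hindep.comp measurable_snd measurable_id
  have hT0_indep : ProbabilityTheory.IndepFun T0 Z P := hindep.comp measurable_fst measurable_id
  rw [← measureReal_def] at hp ⊢
  rw [h_compliers, measureReal_sdiff_of_ae_le hT0_meas h_no_defiers,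
    hT1_indep.integral_observed_mul_instrument hZ hT1,
    hT0_indep.integral_observed_mul_not_instrument hZ hT0, ← hp]
  field_simp [hp0.ne', (sub_pos.2 hp1).ne']
end

section
/- Let (T, Z) be random elements under law P with T taking values in a finite set 𝐓, let μ_Z be a probability measure for Z with μ_Z mutually absolutely continuous with the marginal P_Z, and let π = dP_Z/dμ_Z ≥ δ > 0. For each t ∈ 𝐓 let ν(t,·) be bounded measurable and set κ(t,z) = ν(t,z)/π(z). Then for any bounded measurable functions a(t,·), t ∈ 𝐓: E_P[Σ_{t∈𝐓} κ(t,Z)·(1{T=t} − a(t,Z))] + Σ_{t∈𝐓} E_{μ_Z}[ν(t,Z)·a(t,Z)] = E_P[κ(T,Z)]. In particular, the left-hand side does not depend on the choice of the functions a(t,·). -/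
open MeasureTheory
open scoped BigOperators NNReal ENNReal

/-- Double robustness of the estimating moment for functionals about types: for any choice
of the nuisance functions `a t`, the doubly robust moment equals `E_P[κ(T,Z)]`. -/
theorem stmt15 {Ω α 𝓣 : Type*} [MeasurableSpace Ω] [MeasurableSpace α]
    [Fintype 𝓣] [DecidableEq 𝓣] [MeasurableSpace 𝓣] [MeasurableSingletonClass 𝓣]
    (P : Measure Ω) [IsProbabilityMeasure P]
    (T : Ω → 𝓣) (Z : Ω → α) (hT : Measurable T) (hZ : Measurable Z)
    (μZ : Measure α) [IsProbabilityMeasure μZ]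
    (π : α → ℝ) (hπm : Measurable π) (δ : ℝ) (hδ : 0 < δ) (hπδ : ∀ᵐ z ∂μZ, δ ≤ π z)
    (hPZ : Measure.map Z P = μZ.withDensity (fun z => ENNReal.ofReal (π z)))
    (hμP : μZ ≪ Measure.map Z P)
    (ν : 𝓣 → α → ℝ) (hνm : ∀ t, Measurable (ν t)) (hνb : ∀ t, ∃ C, ∀ z, |ν t z| ≤ C)
    (a : 𝓣 → α → ℝ) (ham : ∀ t, Measurable (a t)) (hab : ∀ t, ∃ C, ∀ z, |a t z| ≤ C) :
    (∫ ω, ∑ t, (ν t (Z ω) / π (Z ω)) * ((if T ω = t then (1:ℝ) else 0) - a t (Z ω)) ∂P)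
      + ∑ t, ∫ z, ν t z * a t z ∂μZ
      = ∫ ω, ν (T ω) (Z ω) / π (Z ω) ∂P := by
  classical
  have hacμ : Measure.map Z P ≪ μZ := by
    rw [hPZ]; exact withDensity_absolutelyContinuous μZ _
  have hδZ : ∀ᵐ ω ∂P, δ ≤ π (Z ω) :=
    ae_of_ae_map hZ.aemeasurable (hπδ.filter_mono hacμ.ae_le)
  have hbdd : ∀ (f : Ω → ℝ), Measurable f → (∃ C, ∀ᵐ ω ∂P, |f ω| ≤ C) → Integrable f P := by
    rintro f hf ⟨C, hC⟩
    exact Integrable.mono' (integrable_const C) hf.aestronglyMeasurable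
      (by filter_upwards [hC] with ω h using by simpa [Real.norm_eq_abs] using h)
  have hκm : ∀ t, Measurable fun ω => ν t (Z ω) / π (Z ω) :=
    fun t => ((hνm t).comp hZ).div (hπm.comp hZ)
  have hκb : ∀ t, ∃ C, ∀ᵐ ω ∂P, |ν t (Z ω) / π (Z ω)| ≤ C := by
    intro t
    obtain ⟨C, hC⟩ := hνb t
    refine ⟨max C 0 / δ, ?_⟩
    filter_upwards [hδZ] with ω hω
    have hπpos : 0 < π (Z ω) := lt_of_lt_of_le hδ hω
    rw [abs_div, abs_of_pos hπpos]
    exact div_le_div₀ (le_max_right C 0) (le_trans (hC _) (le_max_left _ _)) hδ hω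
  have hIa : ∀ t, Integrable (fun ω => (ν t (Z ω) / π (Z ω)) * a t (Z ω)) P := by
    intro t
    obtain ⟨C, hC⟩ := hκb t
    obtain ⟨Ca, hCa⟩ := hab t
    refine hbdd _ ((hκm t).mul ((ham t).comp hZ)) ⟨max C 0 * max Ca 0, ?_⟩
    filter_upwards [hC] with ω hω
    rw [abs_mul]
    exact mul_le_mul (le_trans hω (le_max_left _ _))
      (le_trans (hCa _) (le_max_left _ _)) (abs_nonneg _) (le_max_right C 0)
  have hIi : ∀ t, Integrable (fun ω => (ν t (Z ω) / π (Z ω)) * (if T ω = t then (1:ℝ) else 0)) P := by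
    intro t
    obtain ⟨C, hC⟩ := hκb t
    refine hbdd _ ((hκm t).mul ?_) ⟨max C 0 * 1, ?_⟩
    · exact Measurable.ite (hT (measurableSet_singleton t)) measurable_const measurable_const
    · filter_upwards [hC] with ω hω
      rw [abs_mul]
      refine mul_le_mul (le_trans hω (le_max_left _ _)) ?_ (abs_nonneg _) (le_max_right C 0)
      split <;> simp
  have hIsum : ∀ t, Integrable
      (fun ω => (ν t (Z ω) / π (Z ω)) * ((if T ω = t then (1:ℝ) else 0) - a t (Z ω))) P := by
    intro t
    have : (fun ω => (ν t (Z ω) / π (Z ω)) * ((if T ω = t then (1:ℝ) else 0) - a t (Z ω)))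
        = fun ω => (ν t (Z ω) / π (Z ω)) * (if T ω = t then (1:ℝ) else 0)
          - (ν t (Z ω) / π (Z ω)) * a t (Z ω) := funext fun ω => mul_sub _ _ _
    rw [this]
    exact (hIi t).sub (hIa t)
  have key : ∀ t, ∫ ω, (ν t (Z ω) / π (Z ω)) * a t (Z ω) ∂P = ∫ z, ν t z * a t z ∂μZ := by
    intro t
    have h1 : ∫ ω, (ν t (Z ω) / π (Z ω)) * a t (Z ω) ∂P
        = ∫ z, (ν t z / π z) * a t z ∂(Measure.map Z P) :=
      (integral_map hZ.aemeasurable (((hνm t).div hπm).mul (ham t)).aestronglyMeasurable).symm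
    rw [h1, hPZ]
    have h2 : (fun z => ENNReal.ofReal (π z))
        = fun z => ((Real.toNNReal (π z) : ℝ≥0) : ℝ≥0∞) := rfl
    rw [h2, integral_withDensity_eq_integral_smul
      (f := fun z => (π z).toNNReal) hπm.real_toNNReal (fun z => (ν t z / π z) * a t z)]
    refine integral_congr_ae ?_
    filter_upwards [hπδ] with z hz
    have hπ0 : π z ≠ 0 := ne_of_gt (lt_of_lt_of_le hδ hz)
    rw [NNReal.smul_def, Real.coe_toNNReal _ (le_of_lt (lt_of_lt_of_le hδ hz)), smul_eq_mul]
    field_simp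
  have hRHS : ∫ ω, ν (T ω) (Z ω) / π (Z ω) ∂P
      = ∑ t, ∫ ω, (ν t (Z ω) / π (Z ω)) * (if T ω = t then (1:ℝ) else 0) ∂P := by
    rw [← integral_finset_sum _ (fun t _ => hIi t)]
    refine integral_congr_ae (Filter.Eventually.of_forall fun ω => ?_)
    simp [mul_ite, mul_one, mul_zero, Finset.sum_ite_eq]
  rw [integral_finset_sum _ (fun t _ => hIsum t), hRHS, ← Finset.sum_add_distrib]
  refine Finset.sum_congr rfl fun t _ => ?_
  have h3 : (fun ω => (ν t (Z ω) / π (Z ω)) * ((if T ω = t then (1:ℝ) else 0) - a t (Z ω)))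
      = fun ω => (ν t (Z ω) / π (Z ω)) * (if T ω = t then (1:ℝ) else 0)
        - (ν t (Z ω) / π (Z ω)) * a t (Z ω) := funext fun ω => mul_sub _ _ _
  rw [h3, integral_sub (hIi t) (hIa t), key t]
  ring
end

section
/- Let Q₁ and Q₂ be probability measures for random elements (U, Z, X) such that the joint law of (Z, X) is the same under Q₁ and Q₂, and such that U ⊥ Z | X holds under both Q₁ and Q₂. Then for every γ ∈ [0,1], the mixture Q_γ = γQ₁ + (1−γ)Q₂ also satisfies U ⊥ Z | X. -/
open MeasureTheory

/-- `m` is a version of `E_Q[h | X]`: it reproduces integrals of `h` against all bounded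
measurable functions of `X`. -/
def IsCondExpVersion {Ω γ : Type*} [MeasurableSpace Ω] [MeasurableSpace γ]
    (Q : Measure Ω) (X : Ω → γ) (h : Ω → ℝ) (m : γ → ℝ) : Prop :=
  ∀ b : γ → ℝ, Measurable b → (∃ C, ∀ x, |b x| ≤ C) →
    ∫ ω, h ω * b (X ω) ∂Q = ∫ ω, m (X ω) * b (X ω) ∂Q

/-- Conditional independence `U ⊥ Z | X` under `Q`: for all bounded measurable `f(U,X)`,
`h(Z,X)` and any measurable version `m` of `E_Q[h(Z,X)|X]`,
`E_Q[f(U,X) h(Z,X)] = E_Q[f(U,X) m(X)]`. -/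
def CondIndepGiven {Ω α β γ : Type*} [MeasurableSpace Ω] [MeasurableSpace α]
    [MeasurableSpace β] [MeasurableSpace γ]
    (Q : Measure Ω) (U : Ω → α) (Z : Ω → β) (X : Ω → γ) : Prop :=
  ∀ (f : α × γ → ℝ) (h : β × γ → ℝ), Measurable f → Measurable h →
    (∃ C, ∀ p, |f p| ≤ C) → (∃ C, ∀ p, |h p| ≤ C) →
    ∀ m : γ → ℝ, Measurable m →
      IsCondExpVersion Q X (fun ω => h (Z ω, X ω)) m →
      ∫ ω, f (U ω, X ω) * h (Z ω, X ω) ∂Q = ∫ ω, f (U ω, X ω) * m (X ω) ∂Q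

/-- Transfer an integral of a composition along an equality of pushforward measures. -/
lemma comp_int_eq {Ω δ : Type*} [MeasurableSpace Ω] [MeasurableSpace δ]
    {Q Q' : Measure Ω} {T : Ω → δ} (hT : Measurable T) (hmap : Q.map T = Q'.map T)
    {g : δ → ℝ} (hg : Measurable g) :
    ∫ ω, g (T ω) ∂Q = ∫ ω, g (T ω) ∂Q' := by
  rw [← integral_map hT.aemeasurable hg.aestronglyMeasurable, hmap,
    integral_map hT.aemeasurable hg.aestronglyMeasurable]

lemma integrable_of_bdd {Ω : Type*} [MeasurableSpace Ω] (Q : Measure Ω) [IsFiniteMeasure Q]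
    (f : Ω → ℝ) (hf : Measurable f) (C : ℝ) (hC : ∀ ω, |f ω| ≤ C) : Integrable f Q :=
  (integrable_const C).mono' hf.aestronglyMeasurable
    (Filter.Eventually.of_forall (by simpa [Real.norm_eq_abs] using hC))

/-- Convexity of the identified set: if `Q₁, Q₂` share the same `(Z,X)`-marginal and both
satisfy `U ⊥ Z | X`, then so does every mixture `γQ₁ + (1−γ)Q₂`. -/
theorem stmt16 {Ω α β γ : Type*} [MeasurableSpace Ω] [MeasurableSpace α]
    [MeasurableSpace β] [MeasurableSpace γ]
    (Q1 Q2 : Measure Ω) [IsProbabilityMeasure Q1] [IsProbabilityMeasure Q2]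
    (U : Ω → α) (Z : Ω → β) (X : Ω → γ)
    (hU : Measurable U) (hZ : Measurable Z) (hX : Measurable X)
    (hmarg : Measure.map (fun ω => (Z ω, X ω)) Q1 = Measure.map (fun ω => (Z ω, X ω)) Q2)
    (h1 : CondIndepGiven Q1 U Z X) (h2 : CondIndepGiven Q2 U Z X)
    (c : ℝ) (hc0 : 0 ≤ c) (hc1 : c ≤ 1) :
    CondIndepGiven (ENNReal.ofReal c • Q1 + ENNReal.ofReal (1 - c) • Q2) U Z X := by
  intro f h hf hh hfB hhB m hm hver
  set Q : Measure Ω := ENNReal.ofReal c • Q1 + ENNReal.ofReal (1 - c) • Q2 with hQdef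
  have hc1' : (0:ℝ) ≤ 1 - c := by linarith
  have hcsum : ENNReal.ofReal c + ENNReal.ofReal (1 - c) = 1 := by
    rw [← ENNReal.ofReal_add hc0 hc1']
    norm_num
  have hZX : Measurable fun ω => (Z ω, X ω) := hZ.prodMk hX
  -- the (Z,X)-marginal of Q equals that of Q1 and of Q2
  have hmapZX1 : Q.map (fun ω => (Z ω, X ω)) = Q1.map (fun ω => (Z ω, X ω)) := by
    rw [hQdef, Measure.map_add _ _ hZX, Measure.map_smul, Measure.map_smul, hmarg,
      ← add_smul, hcsum, one_smul]
  have hmapZX2 : Q.map (fun ω => (Z ω, X ω)) = Q2.map (fun ω => (Z ω, X ω)) := by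
    rw [hmapZX1, hmarg]
  -- the X-marginals agree too, since X = snd ∘ (Z,X)
  have hXsnd : ∀ μ : Measure Ω, μ.map (fun ω => (Z ω, X ω)) = Q.map (fun ω => (Z ω, X ω)) →
      μ.map X = Q.map X := by
    intro μ hμ
    have h1' : (μ.map (fun ω => (Z ω, X ω))).map Prod.snd = μ.map X := by
      rw [Measure.map_map measurable_snd hZX]; rfl
    have h2' : (Q.map (fun ω => (Z ω, X ω))).map Prod.snd = Q.map X := by
      rw [Measure.map_map measurable_snd hZX]; rfl
    rw [← h1', hμ, h2']
  have hmapX1 : Q1.map X = Q.map X := hXsnd Q1 hmapZX1.symm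
  have hmapX2 : Q2.map X = Q.map X := hXsnd Q2 hmapZX2.symm
  -- Q is a probability measure
  have hQprob : IsProbabilityMeasure Q := by
    constructor
    rw [hQdef]
    simp only [Measure.coe_add, Measure.coe_smul, Pi.add_apply, Pi.smul_apply,
      measure_univ, smul_eq_mul, mul_one]
    exact hcsum
  -- m is a version of the conditional expectation under Q1 and Q2 as well
  have hver' : ∀ μ : Measure Ω, μ.map (fun ω => (Z ω, X ω)) = Q.map (fun ω => (Z ω, X ω)) →
      μ.map X = Q.map X → IsCondExpVersion μ X (fun ω => h (Z ω, X ω)) m := by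
    intro μ hμ1 hμ2 b hb hbB
    have hgm : Measurable fun p : β × γ => h p * b p.2 :=
      hh.mul (hb.comp measurable_snd)
    have e1 : ∫ ω, h (Z ω, X ω) * b (X ω) ∂μ = ∫ ω, h (Z ω, X ω) * b (X ω) ∂Q :=
      comp_int_eq hZX hμ1 hgm
    have e2 : ∫ ω, m (X ω) * b (X ω) ∂μ = ∫ ω, m (X ω) * b (X ω) ∂Q :=
      comp_int_eq hX hμ2 (hm.mul hb)
    rw [e1, e2]
    exact hver b hb hbB
  have hver1 := hver' Q1 hmapZX1.symm hmapX1
  have hver2 := hver' Q2 hmapZX2.symm hmapX2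
  have key1 : ∫ ω, f (U ω, X ω) * h (Z ω, X ω) ∂Q1 = ∫ ω, f (U ω, X ω) * m (X ω) ∂Q1 :=
    h1 f h hf hh hfB hhB m hm hver1
  have key2 : ∫ ω, f (U ω, X ω) * h (Z ω, X ω) ∂Q2 = ∫ ω, f (U ω, X ω) * m (X ω) ∂Q2 :=
    h2 f h hf hh hfB hhB m hm hver2
  obtain ⟨Cf, hCf⟩ := hfB
  obtain ⟨Ch, hCh⟩ := hhB
  -- m ∘ X is integrable under Q
  have hmint : Integrable (fun ω => m (X ω)) Q := by
    refine ⟨(hm.comp hX).aestronglyMeasurable, ?_⟩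
    -- truncated versions
    set t : ℕ → Ω → ℝ := fun n ω => if |m (X ω)| ≤ (n : ℝ) then |m (X ω)| else 0 with ht
    have htmeas : ∀ n, Measurable (t n) := by
      intro n
      exact Measurable.ite (measurableSet_le ((hm.comp hX).abs) measurable_const)
        ((hm.comp hX).abs) measurable_const
    have htnonneg : ∀ n ω, 0 ≤ t n ω := by
      intro n ω; simp only [ht]; split <;> simp [abs_nonneg]
    have htbd : ∀ n ω, |t n ω| ≤ (n : ℝ) := by
      intro n ω
      simp only [ht]
      split
      · rwa [abs_abs]
      · simp
    have htint : ∀ n, Integrable (t n) Q := fun n =>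
      integrable_of_bdd Q (t n) (htmeas n) n (htbd n)
    -- bound on the integral of each truncation
    have htle : ∀ n, ∫ ω, t n ω ∂Q ≤ |Ch| := by
      intro n
      set b : γ → ℝ := fun x => if |m x| ≤ (n : ℝ) then (if 0 ≤ m x then 1 else -1) else 0
        with hb
      have hbmeas : Measurable b := by
        refine Measurable.ite (measurableSet_le hm.abs measurable_const) ?_ measurable_const
        exact Measurable.ite (measurableSet_le measurable_const hm) measurable_const
          measurable_const
      have hbB : ∀ x, |b x| ≤ 1 := by
        intro x; simp only [hb]
        split
        · split <;> norm_num
        · norm_num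
      have hprod : ∀ ω, m (X ω) * b (X ω) = t n ω := by
        intro ω
        simp only [hb, ht]
        split_ifs with h1 h2
        · rw [mul_one, abs_of_nonneg h2]
        · rw [mul_neg_one, abs_of_neg (lt_of_not_ge h2)]
        · rw [mul_zero]
      have := (hver b hbmeas ⟨1, hbB⟩).symm
      have heq : ∫ ω, t n ω ∂Q = ∫ ω, h (Z ω, X ω) * b (X ω) ∂Q := by
        rw [← this]
        exact integral_congr_ae (Filter.Eventually.of_forall fun ω => (hprod ω).symm)
      rw [heq]
      calc ∫ ω, h (Z ω, X ω) * b (X ω) ∂Q ≤ |∫ ω, h (Z ω, X ω) * b (X ω) ∂Q| := le_abs_self _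
        _ ≤ |Ch| * (Q Set.univ).toReal := by
            rw [← Real.norm_eq_abs (∫ _, _ ∂Q)]
            refine norm_integral_le_of_norm_le_const ?_
            refine Filter.Eventually.of_forall fun ω => ?_
            rw [Real.norm_eq_abs, abs_mul]
            calc |h (Z ω, X ω)| * |b (X ω)| ≤ |Ch| * 1 :=
                  mul_le_mul ((hCh _).trans (le_abs_self _)) (hbB _) (abs_nonneg _)
                    (abs_nonneg _)
              _ = |Ch| := mul_one _
        _ = |Ch| := by simp [measure_univ]
    -- monotone convergence
    have hfin : ∫⁻ ω, ENNReal.ofReal |m (X ω)| ∂Q ≤ ENNReal.ofReal |Ch| := by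
      have hpt : ∀ ω, ENNReal.ofReal |m (X ω)| = ⨆ n : ℕ, ENNReal.ofReal (t n ω) := by
        intro ω
        refine le_antisymm ?_ ?_
        · obtain ⟨n, hn⟩ := exists_nat_ge (|m (X ω)|)
          refine le_iSup_of_le n ?_
          simp only [ht, if_pos hn]
          exact le_rfl
        · refine iSup_le fun n => ENNReal.ofReal_le_ofReal ?_
          simp only [ht]
          split
          · exact le_rfl
          · exact abs_nonneg _
      calc ∫⁻ ω, ENNReal.ofReal |m (X ω)| ∂Q
          = ∫⁻ ω, ⨆ n : ℕ, ENNReal.ofReal (t n ω) ∂Q := by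
            exact lintegral_congr fun ω => hpt ω
        _ = ⨆ n : ℕ, ∫⁻ ω, ENNReal.ofReal (t n ω) ∂Q := by
            refine lintegral_iSup (fun n => (htmeas n).ennreal_ofReal) ?_
            intro i j hij ω
            refine ENNReal.ofReal_le_ofReal ?_
            simp only [ht]
            by_cases hi : |m (X ω)| ≤ (i : ℝ)
            · rw [if_pos hi, if_pos (hi.trans (Nat.cast_le.2 hij))]
            · rw [if_neg hi]
              by_cases hj : |m (X ω)| ≤ (j : ℝ)
              · rw [if_pos hj]; exact abs_nonneg _
              · rw [if_neg hj]
        _ ≤ ENNReal.ofReal |Ch| := by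
            refine iSup_le fun n => ?_
            rw [← ofReal_integral_eq_lintegral_ofReal (htint n)
              (Filter.Eventually.of_forall (htnonneg n))]
            exact ENNReal.ofReal_le_ofReal (htle n)
    refine lt_of_le_of_lt ?_ (ENNReal.ofReal_lt_top (r := |Ch|))
    calc ∫⁻ ω, ‖m (X ω)‖₊ ∂Q = ∫⁻ ω, ENNReal.ofReal |m (X ω)| ∂Q := by
          refine lintegral_congr fun ω => ?_
          rw [← Real.norm_eq_abs, ofReal_norm, enorm_eq_nnnorm]
      _ ≤ ENNReal.ofReal |Ch| := hfin
  -- hence m ∘ X is integrable under Q1 and Q2, and so are the products with f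
  have hmint' : ∀ μ : Measure Ω, μ.map X = Q.map X → Integrable (fun ω => m (X ω)) μ := by
    intro μ hμ
    have h1' : Integrable m (Q.map X) :=
      (integrable_map_measure hm.aestronglyMeasurable hX.aemeasurable).2 hmint
    rw [← hμ] at h1'
    exact (integrable_map_measure hm.aestronglyMeasurable hX.aemeasurable).1 h1'
  have hfmeas : Measurable fun ω => f (U ω, X ω) := hf.comp (hU.prodMk hX)
  have hfmint : ∀ μ : Measure Ω, Integrable (fun ω => m (X ω)) μ →
      Integrable (fun ω => f (U ω, X ω) * m (X ω)) μ := by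
    intro μ hμ
    refine (hμ.abs.const_mul |Cf|).mono' (hfmeas.mul (hm.comp hX)).aestronglyMeasurable ?_
    refine Filter.Eventually.of_forall fun ω => ?_
    rw [Real.norm_eq_abs, abs_mul]
    exact mul_le_mul_of_nonneg_right ((hCf _).trans (le_abs_self _)) (abs_nonneg _)
  have hfm1 : Integrable (fun ω => f (U ω, X ω) * m (X ω)) Q1 :=
    hfmint Q1 (hmint' Q1 hmapX1)
  have hfm2 : Integrable (fun ω => f (U ω, X ω) * m (X ω)) Q2 :=
    hfmint Q2 (hmint' Q2 hmapX2)
  -- f·h is integrable everywhere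
  have hfhmeas : Measurable fun ω => f (U ω, X ω) * h (Z ω, X ω) :=
    hfmeas.mul (hh.comp hZX)
  have hfhbd : ∀ ω, |f (U ω, X ω) * h (Z ω, X ω)| ≤ |Cf| * |Ch| := by
    intro ω
    rw [abs_mul]
    exact mul_le_mul ((hCf _).trans (le_abs_self _)) ((hCh _).trans (le_abs_self _))
      (abs_nonneg _) (abs_nonneg _)
  have hfh1 : Integrable (fun ω => f (U ω, X ω) * h (Z ω, X ω)) Q1 :=
    integrable_of_bdd Q1 _ hfhmeas _ hfhbd
  have hfh2 : Integrable (fun ω => f (U ω, X ω) * h (Z ω, X ω)) Q2 :=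
    integrable_of_bdd Q2 _ hfhmeas _ hfhbd
  -- splitting the integrals over the mixture
  have hcne : ENNReal.ofReal c ≠ ⊤ := ENNReal.ofReal_ne_top
  have hcne' : ENNReal.ofReal (1 - c) ≠ ⊤ := ENNReal.ofReal_ne_top
  have split : ∀ g : Ω → ℝ, Integrable g Q1 → Integrable g Q2 →
      ∫ ω, g ω ∂Q = c * ∫ ω, g ω ∂Q1 + (1 - c) * ∫ ω, g ω ∂Q2 := by
    intro g hg1 hg2
    rw [hQdef, integral_add_measure (hg1.smul_measure hcne) (hg2.smul_measure hcne'),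
      integral_smul_measure, integral_smul_measure, ENNReal.toReal_ofReal hc0,
      ENNReal.toReal_ofReal hc1', smul_eq_mul, smul_eq_mul]
  rw [split _ hfh1 hfh2, split _ hfm1 hfm2, key1, key2]
end

section
/- Let 𝐓 be a finite set, (Y*, T*, Z, X) random elements where Y* = (Y*(t))_{t∈𝐓} ∈ ℝ^𝐓 and T* is a random function from the range of Z to 𝐓. Let Q be a probability measure with (Y*, T*) ⊥ Z | X under Q, and let P be the induced law of the observables (Y, T, Z, X) where T = T*(Z) and Y = Y*(T). Suppose the conditional law of Z given X is the same under Q and P. For κ ∈ L¹(P), define Υ(κ)(Y*, T*, X) = Σ_{t∈𝐓} E_{P_{Z|X}}[κ(Y*(t), t, Z, X)·1{T*(Z) = t}], the expectation taken over Z ∼ P_{Z|X} with (Y*, T*, X) fixed. If Υ(κ) = ℓ holds Q-almost surely for a measurable function ℓ of (Y*, T*, X), then ℓ ∈ L¹(Q) and E_Q[ℓ(Y*, T*, X)] = E_P[κ(Y, T, Z, X)]. -/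
/-!
Write `V = (Y*, T*, X)`. Conditional independence says that the joint law of `(V, Z)` under `Q`
is the law of `V` composed with the kernel `v ↦ P_{Z|X = x(v)}`, so any integrable function of
`(V, Z)` has `Q`-integrable inner integral over `z`, with the same total integral. For the
realized outcome `κ(Y*(T*(z)), T*(z), z, X)` exactly one regime `t = T*(z)` is active at each `z`,
so its inner integral splits as the finite sum `Υ(κ)`, which equals `ℓ` almost surely.
-/

open MeasureTheory ProbabilityTheory

section Disintegration

variable {Ω α β : Type*} [MeasurableSpace Ω] [MeasurableSpace α] [MeasurableSpace β]
  {Q : Measure Ω} {V : Ω → α} {Z : Ω → β} {η : Kernel α β}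

theorem map_prodMk_eq_compProd_of_integral_eq [IsFiniteMeasure Q] [IsFiniteKernel η]
    (hV : Measurable V) (hZ : Measurable Z)
    (h : ∀ g : α × β → ℝ, Measurable g → (∃ C, ∀ p, |g p| ≤ C) →
      ∫ ω, g (V ω, Z ω) ∂Q = ∫ ω, ∫ z, g (V ω, z) ∂(η (V ω)) ∂Q) :
    Q.map (fun ω => (V ω, Z ω)) = Q.map V ⊗ₘ η := by
  ext s hs
  have hind : Measurable (s.indicator (1 : α × β → ℝ)) := measurable_one.indicator hs
  have hbdd : ∃ C, ∀ p, |s.indicator (1 : α × β → ℝ) p| ≤ C :=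
    ⟨1, fun p => by by_cases hp : p ∈ s <;> simp [hp]⟩
  have hreal : (Q.map (fun ω => (V ω, Z ω))).real s = (Q.map V ⊗ₘ η).real s := by
    rw [← integral_indicator_one hs, ← integral_indicator_one hs,
      integral_map (hV.prodMk hZ).aemeasurable hind.aestronglyMeasurable, h _ hind hbdd,
      Measure.integral_compProd ((integrable_const 1).indicator hs),
      integral_map hV.aemeasurable
        hind.stronglyMeasurable.integral_kernel_prod_right'.aestronglyMeasurable]
  exact (measureReal_eq_measureReal_iff).mp hreal

theorem integrable_compProd_of_map_prodMk_eq (hV : Measurable V) (hZ : Measurable Z)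
    (hlaw : Q.map (fun ω => (V ω, Z ω)) = Q.map V ⊗ₘ η) {g : α × β → ℝ} (hg : Measurable g)
    (hint : Integrable (fun ω => g (V ω, Z ω)) Q) :
    Integrable g (Q.map V ⊗ₘ η) := by
  rw [← hlaw]
  exact (integrable_map_measure hg.aestronglyMeasurable (hV.prodMk hZ).aemeasurable).mpr hint

variable [IsFiniteMeasure Q] [IsSFiniteKernel η]

theorem ae_integrable_comp_prodMk_of_map_prodMk_eq (hV : Measurable V) (hZ : Measurable Z)
    (hlaw : Q.map (fun ω => (V ω, Z ω)) = Q.map V ⊗ₘ η) {g : α × β → ℝ} (hg : Measurable g)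
    (hint : Integrable (fun ω => g (V ω, Z ω)) Q) :
    ∀ᵐ ω ∂Q, Integrable (fun z => g (V ω, z)) (η (V ω)) :=
  ae_of_ae_map hV.aemeasurable
    (integrable_compProd_of_map_prodMk_eq hV hZ hlaw hg hint).ae_of_compProd

theorem integrable_integral_comp_prodMk_of_map_prodMk_eq (hV : Measurable V) (hZ : Measurable Z)
    (hlaw : Q.map (fun ω => (V ω, Z ω)) = Q.map V ⊗ₘ η) {g : α × β → ℝ} (hg : Measurable g)
    (hint : Integrable (fun ω => g (V ω, Z ω)) Q) :
    Integrable (fun ω => ∫ z, g (V ω, z) ∂(η (V ω))) Q :=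
  (integrable_map_measure hg.stronglyMeasurable.integral_kernel_prod_right'.aestronglyMeasurable
    hV.aemeasurable).mp (integrable_compProd_of_map_prodMk_eq hV hZ hlaw hg hint).integral_compProd

theorem integral_integral_comp_prodMk_of_map_prodMk_eq (hV : Measurable V) (hZ : Measurable Z)
    (hlaw : Q.map (fun ω => (V ω, Z ω)) = Q.map V ⊗ₘ η) {g : α × β → ℝ} (hg : Measurable g)
    (hint : Integrable (fun ω => g (V ω, Z ω)) Q) :
    ∫ ω, ∫ z, g (V ω, z) ∂(η (V ω)) ∂Q = ∫ ω, g (V ω, Z ω) ∂Q := by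
  rw [← integral_map hV.aemeasurable
      hg.stronglyMeasurable.integral_kernel_prod_right'.aestronglyMeasurable,
    ← Measure.integral_compProd (integrable_compProd_of_map_prodMk_eq hV hZ hlaw hg hint), ← hlaw,
    integral_map (hV.prodMk hZ).aemeasurable hg.aestronglyMeasurable]

end Disintegration

theorem integral_eq_sum_integral_mul_ite {β 𝓣 : Type*} [MeasurableSpace β] [Fintype 𝓣]
    [DecidableEq 𝓣] [MeasurableSpace 𝓣] [MeasurableSingletonClass 𝓣] {μ : Measure β}
    {f : 𝓣 → β → ℝ} {e : β → 𝓣} (he : Measurable e) (hf : Integrable (fun z => f (e z) z) μ) :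
    ∫ z, f (e z) z ∂μ = ∑ t, ∫ z, f t z * (if e z = t then 1 else 0) ∂μ := by
  have hregime (t : 𝓣) : (fun z => f t z * (if e z = t then 1 else 0))
      = fun z => (if e z = t then 1 else 0) * f (e z) z := by
    funext z; by_cases h : e z = t <;> simp [h]
  have hint (t : 𝓣) : Integrable (fun z => f t z * (if e z = t then 1 else 0)) μ := by
    rw [hregime t]
    refine hf.bdd_mul (c := 1) ?_ (Filter.Eventually.of_forall fun z => ?_)
    · exact (Measurable.ite (he (measurableSet_singleton t)) measurable_const
        measurable_const).aestronglyMeasurable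
    · by_cases h : e z = t <;> simp [h]
  rw [← integral_finsetSum _ fun t _ => hint t]
  congr 1 with z
  simp [mul_ite]

theorem stmt17_general {Ω β 𝒳 𝒯 𝓣 : Type*}
    [MeasurableSpace Ω] [MeasurableSpace β] [MeasurableSpace 𝒳] [MeasurableSpace 𝒯]
    [Fintype 𝓣] [DecidableEq 𝓣] [MeasurableSpace 𝓣] [MeasurableSingletonClass 𝓣]
    (Q : Measure Ω) [IsProbabilityMeasure Q]
    (Ystar : Ω → 𝓣 → ℝ) (Tstar : Ω → 𝒯) (Z : Ω → β) (X : Ω → 𝒳)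
    (hY : Measurable Ystar) (hTs : Measurable Tstar) (hZ : Measurable Z) (hX : Measurable X)
    (ev : 𝒯 → β → 𝓣) (hev : Measurable (fun p : 𝒯 × β => ev p.1 p.2))
    (ζ : Kernel 𝒳 β) [IsMarkovKernel ζ]
    (hker : ∀ g : (𝓣 → ℝ) × 𝒯 × β × 𝒳 → ℝ, Measurable g → (∃ C, ∀ p, |g p| ≤ C) →
      ∫ ω, g (Ystar ω, Tstar ω, Z ω, X ω) ∂Q
        = ∫ ω, (∫ z, g (Ystar ω, Tstar ω, z, X ω) ∂(ζ (X ω))) ∂Q)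
    (κ : ℝ × 𝓣 × β × 𝒳 → ℝ) (hκm : Measurable κ)
    (hκint : Integrable (fun ω =>
      κ (Ystar ω (ev (Tstar ω) (Z ω)), ev (Tstar ω) (Z ω), Z ω, X ω)) Q)
    (ℓ : (𝓣 → ℝ) × 𝒯 × 𝒳 → ℝ)
    (hid : ∀ᵐ ω ∂Q,
      (∑ t, ∫ z, κ (Ystar ω t, t, z, X ω) * (if ev (Tstar ω) z = t then (1:ℝ) else 0)
        ∂(ζ (X ω)))
        = ℓ (Ystar ω, Tstar ω, X ω)) :
    Integrable (fun ω => ℓ (Ystar ω, Tstar ω, X ω)) Q ∧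
      ∫ ω, ℓ (Ystar ω, Tstar ω, X ω) ∂Q
        = ∫ ω, κ (Ystar ω (ev (Tstar ω) (Z ω)), ev (Tstar ω) (Z ω), Z ω, X ω) ∂Q := by
  let V : Ω → (𝓣 → ℝ) × 𝒯 × 𝒳 := fun ω => (Ystar ω, Tstar ω, X ω)
  have hV : Measurable V := hY.prodMk (hTs.prodMk hX)
  let η : Kernel ((𝓣 → ℝ) × 𝒯 × 𝒳) β := ζ.comap (fun v => v.2.2) measurable_snd.snd
  have hregroup : Measurable fun p : (𝓣 → ℝ) × 𝒯 × β × 𝒳 => ((p.1, p.2.1, p.2.2.2), p.2.2.1) :=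
    (measurable_fst.prodMk (measurable_snd.fst.prodMk measurable_snd.snd.snd)).prodMk
      measurable_snd.snd.fst
  have hlaw : Q.map (fun ω => (V ω, Z ω)) = Q.map V ⊗ₘ η :=
    map_prodMk_eq_compProd_of_integral_eq hV hZ fun g hg ⟨C, hC⟩ =>
      hker (g ∘ _) (hg.comp hregroup) ⟨C, fun p => hC _⟩
  let g : ((𝓣 → ℝ) × 𝒯 × 𝒳) × β → ℝ := fun q =>
    κ (q.1.1 (ev q.1.2.1 q.2), ev q.1.2.1 q.2, q.2, q.1.2.2)
  have hevq : Measurable fun q : ((𝓣 → ℝ) × 𝒯 × 𝒳) × β => ev q.1.2.1 q.2 :=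
    hev.comp (measurable_fst.snd.fst.prodMk measurable_snd)
  have heval : Measurable fun q : (𝓣 → ℝ) × 𝓣 => q.1 q.2 :=
    measurable_from_prod_countable_left fun t => measurable_pi_apply t
  have hg : Measurable g := hκm.comp <|
    (heval.comp (measurable_fst.fst.prodMk hevq)).prodMk
      (hevq.prodMk (measurable_snd.prodMk measurable_fst.snd.snd))
  have hinner : ∀ᵐ ω ∂Q, ∫ z, g (V ω, z) ∂(η (V ω)) = ℓ (V ω) := by
    filter_upwards [ae_integrable_comp_prodMk_of_map_prodMk_eq hV hZ hlaw hg hκint, hid]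
      with ω hslice hΥ
    rw [← hΥ]
    exact integral_eq_sum_integral_mul_ite (f := fun t z => κ (Ystar ω t, t, z, X ω))
      (hev.comp (measurable_const.prodMk measurable_id)) hslice
  refine ⟨(integrable_integral_comp_prodMk_of_map_prodMk_eq hV hZ hlaw hg hκint).congr hinner, ?_⟩
  rw [← integral_congr_ae hinner]
  exact integral_integral_comp_prodMk_of_map_prodMk_eq hV hZ hlaw hg hκint

/-- Basic identification formula (Lemma `lm:warmup`): if `ζ` is the conditional law of the
instrument `Z` given `X` and `Z ⊥ (Y*,T*) | X` (encoded by the kernel representation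
hypothesis `hker`), and `Υ(κ) = ℓ` holds `Q`-a.s., where
`Υ(κ) = Σ_t ∫ κ(Y*(t), t, z, X) 1{T*(z) = t} dζ(X)`, then `ℓ(Y*,T*,X)` is `Q`-integrable
and `E_Q[ℓ(Y*,T*,X)] = E_P[κ(Y,T,Z,X)]` with `T = T*(Z)`, `Y = Y*(T)`. -/
theorem stmt17 {Ω β 𝒳 𝒯 𝓣 : Type*}
    [MeasurableSpace Ω] [MeasurableSpace β] [MeasurableSpace 𝒳] [MeasurableSpace 𝒯]
    [Fintype 𝓣] [DecidableEq 𝓣] [MeasurableSpace 𝓣] [MeasurableSingletonClass 𝓣]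
    (Q : Measure Ω) [IsProbabilityMeasure Q]
    (Ystar : Ω → 𝓣 → ℝ) (Tstar : Ω → 𝒯) (Z : Ω → β) (X : Ω → 𝒳)
    (hY : Measurable Ystar) (hTs : Measurable Tstar) (hZ : Measurable Z) (hX : Measurable X)
    (ev : 𝒯 → β → 𝓣) (hev : Measurable (fun p : 𝒯 × β => ev p.1 p.2))
    (ζ : Kernel 𝒳 β) [IsMarkovKernel ζ]
    (hker : ∀ g : (𝓣 → ℝ) × 𝒯 × β × 𝒳 → ℝ, Measurable g → (∃ C, ∀ p, |g p| ≤ C) →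
      ∫ ω, g (Ystar ω, Tstar ω, Z ω, X ω) ∂Q
        = ∫ ω, (∫ z, g (Ystar ω, Tstar ω, z, X ω) ∂(ζ (X ω))) ∂Q)
    (κ : ℝ × 𝓣 × β × 𝒳 → ℝ) (hκm : Measurable κ)
    (hκint : Integrable (fun ω =>
      κ (Ystar ω (ev (Tstar ω) (Z ω)), ev (Tstar ω) (Z ω), Z ω, X ω)) Q)
    (ℓ : (𝓣 → ℝ) × 𝒯 × 𝒳 → ℝ) (hℓm : Measurable ℓ)
    (hid : ∀ᵐ ω ∂Q,
      (∑ t, ∫ z, κ (Ystar ω t, t, z, X ω) * (if ev (Tstar ω) z = t then (1:ℝ) else 0)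
        ∂(ζ (X ω)))
        = ℓ (Ystar ω, Tstar ω, X ω)) :
    Integrable (fun ω => ℓ (Ystar ω, Tstar ω, X ω)) Q ∧
      ∫ ω, ℓ (Ystar ω, Tstar ω, X ω) ∂Q
        = ∫ ω, κ (Ystar ω (ev (Tstar ω) (Z ω)), ev (Tstar ω) (Z ω), Z ω, X ω) ∂Q :=
  stmt17_general Q Ystar Tstar Z X hY hTs hZ hX ev hev ζ hker κ hκm hκint ℓ hid
end
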